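/- arXiv:2212.03701 — 6 statements merged into one kernel-verified Lean document; each statement's English description precedes it below -/
import Mathlib

section
/- Let h : [0, 2π] → ℝ be twice continuously differentiable with h(0) = h(2π) and h'(0) = h'(2π). Then for every ξ ∈ (0, 2π): ∫₀^{2π} G(θ, ξ) h''(θ) dθ = −h(ξ) + (1/(2π)) ∫₀^{2π} h(θ) dθ. -/
open scoped Real

noncomputable def greenKernel (θ ξ : ℝ) : ℝ :=
  (1 / (4 * π)) * (ξ - θ) ^ 2 + min ξ θ - (1 / 2) * (ξ + θ) + π / 3

open Set intervalIntegral

/-!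
On each side of `ξ` the kernel `θ ↦ G(θ, ξ)` is a quadratic polynomial with second derivative
`1/(2π)`, so integrating by parts twice on `[0, ξ]` and on `[ξ, 2π]` turns `∫ G h''` into
`(1/(2π)) ∫ h` plus boundary terms. Since `G(·, ξ)` and `∂_θ G(·, ξ)` take the same values at
`0` and `2π`, the boundary terms there cancel by the periodicity of `h` and `h'`; at `ξ` the
kernel is continuous while `∂_θ G` jumps by `-1`, which leaves `-h(ξ)`.
-/

theorem integral_mul_deriv_deriv_eq_deriv_deriv_mul {u u' u'' f f' f'' : ℝ → ℝ} {a b : ℝ}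
    (hu : ∀ x ∈ uIcc a b, HasDerivAt u (u' x) x) (hu' : ∀ x ∈ uIcc a b, HasDerivAt u' (u'' x) x)
    (hf : ∀ x ∈ uIcc a b, HasDerivAt f (f' x) x) (hf' : ∀ x ∈ uIcc a b, HasDerivAt f' (f'' x) x)
    (hu'' : IntervalIntegrable u'' MeasureTheory.volume a b)
    (hf'' : IntervalIntegrable f'' MeasureTheory.volume a b) :
    ∫ x in a..b, u x * f'' x =
      (u b * f' b - u' b * f b) - (u a * f' a - u' a * f a) + ∫ x in a..b, u'' x * f x := by
  have integrable_of_hasDerivAt {g g' : ℝ → ℝ} (hg : ∀ x ∈ uIcc a b, HasDerivAt g (g' x) x) :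
      IntervalIntegrable g MeasureTheory.volume a b :=
    ContinuousOn.intervalIntegrable fun x hx => (hg x hx).continuousAt.continuousWithinAt
  rw [integral_mul_deriv_eq_deriv_mul hu hf' (integrable_of_hasDerivAt hu') hf'',
    integral_mul_deriv_eq_deriv_mul hu' hf hu'' (integrable_of_hasDerivAt hf')]
  ring

theorem hasDerivAt_quadratic (a b c ξ x : ℝ) :
    HasDerivAt (fun θ => a * (θ - ξ) ^ 2 + b * θ + c) (2 * a * (x - ξ) + b) x := by
  have hsq : HasDerivAt (fun θ => (θ - ξ) ^ 2) (2 * (x - ξ)) x := by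
    simpa using ((hasDerivAt_id' x).sub_const ξ).fun_pow 2
  exact (((hsq.const_mul a).add ((hasDerivAt_id' x).const_mul b)).add_const c).congr_deriv
    (by ring)

theorem hasDerivAt_linear (a b ξ x : ℝ) :
    HasDerivAt (fun θ => 2 * a * (θ - ξ) + b) (2 * a) x := by
  simpa using (((hasDerivAt_id' x).sub_const ξ).const_mul (2 * a)).add_const b

theorem integral_quadratic_mul_deriv_deriv {h : ℝ → ℝ} (hreg : ContDiff ℝ 2 h) (a b c ξ s t : ℝ) :
    ∫ θ in s..t, (a * (θ - ξ) ^ 2 + b * θ + c) * deriv (deriv h) θ =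
      ((a * (t - ξ) ^ 2 + b * t + c) * deriv h t - (2 * a * (t - ξ) + b) * h t)
        - ((a * (s - ξ) ^ 2 + b * s + c) * deriv h s - (2 * a * (s - ξ) + b) * h s)
        + 2 * a * ∫ θ in s..t, h θ := by
  have hreg' : ContDiff ℝ 1 (deriv h) := hreg.deriv'
  rw [integral_mul_deriv_deriv_eq_deriv_deriv_mul
    (fun x _ => hasDerivAt_quadratic a b c ξ x) (fun x _ => hasDerivAt_linear a b ξ x)
    (fun x _ => (hreg.differentiable two_ne_zero x).hasDerivAt)
    (fun x _ => (hreg'.differentiable one_ne_zero x).hasDerivAt)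
    intervalIntegrable_const ((hreg'.continuous_deriv le_rfl).intervalIntegrable s t),
    integral_const_mul]

theorem greenKernel_of_le {θ ξ : ℝ} (hθ : θ ≤ ξ) :
    greenKernel θ ξ = 1 / (4 * π) * (θ - ξ) ^ 2 + 1 / 2 * θ + (π / 3 - ξ / 2) := by
  rw [greenKernel, min_eq_right hθ]
  ring

theorem greenKernel_of_ge {θ ξ : ℝ} (hθ : ξ ≤ θ) :
    greenKernel θ ξ = 1 / (4 * π) * (θ - ξ) ^ 2 + -(1 / 2) * θ + (π / 3 + ξ / 2) := by
  rw [greenKernel, min_eq_left hθ]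
  ring

/-- If `h` is twice continuously differentiable with periodic boundary conditions
`h(0) = h(2π)`, `h'(0) = h'(2π)`, then for every `ξ ∈ (0, 2π)`,
`∫₀^{2π} G(θ, ξ) h''(θ) dθ = −h(ξ) + (1/(2π)) ∫₀^{2π} h(θ) dθ`. -/
theorem greenKernel_reproduces (h : ℝ → ℝ) (hreg : ContDiff ℝ 2 h)
    (hper : h 0 = h (2 * π)) (hper' : deriv h 0 = deriv h (2 * π))
    (ξ : ℝ) (hξ : ξ ∈ Set.Ioo (0 : ℝ) (2 * π)) :
    ∫ θ in (0 : ℝ)..(2 * π), greenKernel θ ξ * deriv (deriv h) θ =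
      -h ξ + (1 / (2 * π)) * ∫ θ in (0 : ℝ)..(2 * π), h θ := by
  obtain ⟨hξ0, hξ2π⟩ := hξ
  have hcont : Continuous fun θ => greenKernel θ ξ * deriv (deriv h) θ := by
    have hcont'' := (hreg.deriv' (n := 1)).continuous_deriv le_rfl
    unfold greenKernel
    fun_prop
  have left : ∫ θ in (0 : ℝ)..ξ, greenKernel θ ξ * deriv (deriv h) θ =
      ∫ θ in (0 : ℝ)..ξ, (1 / (4 * π) * (θ - ξ) ^ 2 + 1 / 2 * θ + (π / 3 - ξ / 2))
        * deriv (deriv h) θ :=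
    integral_congr fun θ hθ => by
      rw [uIcc_of_le hξ0.le] at hθ
      rw [greenKernel_of_le hθ.2]
  have right : ∫ θ in ξ..(2 * π), greenKernel θ ξ * deriv (deriv h) θ =
      ∫ θ in ξ..(2 * π), (1 / (4 * π) * (θ - ξ) ^ 2 + -(1 / 2) * θ + (π / 3 + ξ / 2))
        * deriv (deriv h) θ :=
    integral_congr fun θ hθ => by
      rw [uIcc_of_le hξ2π.le] at hθ
      rw [greenKernel_of_ge hθ.1]
  rw [← integral_add_adjacent_intervals (hcont.intervalIntegrable 0 ξ)
      (hcont.intervalIntegrable ξ (2 * π)), left, right,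
    integral_quadratic_mul_deriv_deriv hreg, integral_quadratic_mul_deriv_deriv hreg,
    ← integral_add_adjacent_intervals (hreg.continuous.intervalIntegrable 0 ξ)
      (hreg.continuous.intervalIntegrable ξ (2 * π)), hper, hper']
  field_simp
  ring
end

section
/- There exist a smooth map Φ : ℝ → ℝ² that is 2π-periodic, injective on [0, 2π), with |Φ'(θ)| constant and positive (a smooth constant-speed embedded closed plane curve), and a vector u* ∈ ℝ², such that ∫₀^{2π} (Φ(θ)·u*) |Φ''(θ)|² dθ ≠ (1/(2π)) (∫₀^{2π} Φ(θ)·u* dθ)(∫₀^{2π} |Φ''(θ)|² dθ). -/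
open scoped Real RealInnerProductSpace

namespace CurveCE

open Real

/-! ### Basic functions -/

noncomputable def ppF (u : ℝ) : ℝ := (1/100) * Real.cos (2*u) + (1/100) * Real.cos (3*u)
noncomputable def rhoF (u : ℝ) : ℝ := 1 + ppF u
noncomputable def qqF (u : ℝ) : ℝ := 1 - ppF u + ppF u ^ 2
noncomputable def pxF (u : ℝ) : ℝ :=
  (201/200) * Real.sin u + (1/400) * Real.sin (2*u) + (1/600) * Real.sin (3*u)
    + (1/800) * Real.sin (4*u)
noncomputable def pyF (u : ℝ) : ℝ :=
  2389/2400 - (199/200) * Real.cos u + (1/400) * Real.cos (2*u) - (1/600) * Real.cos (3*u)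
    - (1/800) * Real.cos (4*u)
noncomputable def betF (u : ℝ) : ℝ := u + (1/200) * Real.sin (2*u) + (1/300) * Real.sin (3*u)

theorem congr_d {f : ℝ → ℝ} {d d' x : ℝ} (h : HasDerivAt f d x) (e : d' = d) :
    HasDerivAt f d' x := e ▸ h

/-! ### Multiple angle formulas (power form) -/

lemma c2 (u : ℝ) : Real.cos (2*u) = Real.cos u ^ 2 - Real.sin u ^ 2 := by
  rw [two_mul, Real.cos_add]; ring

lemma s2 (u : ℝ) : Real.sin (2*u) = 2 * (Real.sin u * Real.cos u) := by
  rw [two_mul, Real.sin_add]; ring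

lemma c3 (u : ℝ) : Real.cos (3*u) = Real.cos u ^ 3 - 3 * Real.cos u * Real.sin u ^ 2 := by
  rw [show (3:ℝ)*u = 2*u + u by ring, Real.cos_add, c2, s2]; ring

lemma s3 (u : ℝ) : Real.sin (3*u) = 3 * Real.cos u ^ 2 * Real.sin u - Real.sin u ^ 3 := by
  rw [show (3:ℝ)*u = 2*u + u by ring, Real.sin_add, c2, s2]; ring

lemma c4 (u : ℝ) : Real.cos (4*u)
    = Real.cos u ^ 4 - 6 * Real.cos u ^ 2 * Real.sin u ^ 2 + Real.sin u ^ 4 := by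
  rw [show (4:ℝ)*u = 3*u + u by ring, Real.cos_add, c3, s3]; ring

lemma s4 (u : ℝ) : Real.sin (4*u)
    = 4 * Real.cos u ^ 3 * Real.sin u - 4 * Real.cos u * Real.sin u ^ 3 := by
  rw [show (4:ℝ)*u = 3*u + u by ring, Real.sin_add, c3, s3]; ring

/-! ### Bounds -/

lemma pp_abs_le (u : ℝ) : |ppF u| ≤ 1/50 := by
  have h1 := Real.neg_one_le_cos (2*u); have h2 := Real.cos_le_one (2*u)
  have h3 := Real.neg_one_le_cos (3*u); have h4 := Real.cos_le_one (3*u)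
  rw [abs_le]; constructor <;> (simp only [ppF]; nlinarith)

lemma rho_ge (u : ℝ) : 49/50 ≤ rhoF u := by
  have := pp_abs_le u; rw [abs_le] at this; simp only [rhoF]; linarith [this.1]

lemma rho_pos (u : ℝ) : 0 < rhoF u := lt_of_lt_of_le (by norm_num) (rho_ge u)

lemma rho_ne (u : ℝ) : rhoF u ≠ 0 := (rho_pos u).ne'

lemma py_abs_le (u : ℝ) : |pyF u| ≤ 479/240 := by
  have h1 := Real.neg_one_le_cos u; have h2 := Real.cos_le_one u
  have h3 := Real.neg_one_le_cos (2*u); have h4 := Real.cos_le_one (2*u)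
  have h5 := Real.neg_one_le_cos (3*u); have h6 := Real.cos_le_one (3*u)
  have h7 := Real.neg_one_le_cos (4*u); have h8 := Real.cos_le_one (4*u)
  rw [abs_le]; constructor <;> (simp only [pyF]; nlinarith)

/-! ### Continuity -/

lemma cont_pp : Continuous ppF := by unfold ppF; fun_prop
lemma cont_rho : Continuous rhoF := by unfold rhoF ppF; fun_prop
lemma cont_qq : Continuous qqF := by unfold qqF ppF; fun_prop
lemma cont_py : Continuous pyF := by unfold pyF; fun_prop
lemma cont_rho_inv : Continuous fun u => (rhoF u)⁻¹ := cont_rho.inv₀ rho_ne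

/-! ### Derivatives -/

lemma hd_sin_mul (k u : ℝ) : HasDerivAt (fun x : ℝ => Real.sin (k*x)) (Real.cos (k*u) * k) u := by
  have h := (Real.hasDerivAt_sin (k*u)).comp u ((hasDerivAt_id u).const_mul k)
  simpa [Function.comp_def] using h

lemma hd_cos_mul (k u : ℝ) :
    HasDerivAt (fun x : ℝ => Real.cos (k*x)) (-Real.sin (k*u) * k) u := by
  have h := (Real.hasDerivAt_cos (k*u)).comp u ((hasDerivAt_id u).const_mul k)
  simpa [Function.comp_def] using h

lemma hd_bet (u : ℝ) : HasDerivAt betF (rhoF u) u := by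
  have h := (((hasDerivAt_id u).add
      ((hd_sin_mul 2 u).const_mul (1/200))).add ((hd_sin_mul 3 u).const_mul (1/300)))
  exact congr_d h (by simp only [rhoF, ppF]; ring)

lemma hd_px (u : ℝ) : HasDerivAt pxF (Real.cos u * rhoF u) u := by
  have h := ((((Real.hasDerivAt_sin u).const_mul (201/200)).add
      ((hd_sin_mul 2 u).const_mul (1/400))).add
      ((hd_sin_mul 3 u).const_mul (1/600))).add ((hd_sin_mul 4 u).const_mul (1/800))
  exact congr_d h (by
    simp only [rhoF, ppF]
    simp only [c2, s2, c3, s3, c4, s4]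
    linear_combination ((-1/200 : ℝ) * Real.sin u ^ 2 + (1/200 : ℝ) * Real.cos u
      + (1/200 : ℝ) * Real.cos u ^ 2) * (Real.sin_sq_add_cos_sq u))

lemma hd_py (u : ℝ) : HasDerivAt pyF (Real.sin u * rhoF u) u := by
  have h := (((((hasDerivAt_const u (2389/2400 : ℝ)).sub
      ((Real.hasDerivAt_cos u).const_mul (199/200))).add
      ((hd_cos_mul 2 u).const_mul (1/400))).sub
      ((hd_cos_mul 3 u).const_mul (1/600))).sub ((hd_cos_mul 4 u).const_mul (1/800)))
  exact congr_d h (by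
    simp only [rhoF, ppF]
    simp only [c2, s2, c3, s3, c4, s4]
    linear_combination ((-1/200 : ℝ) * Real.sin u + (-1/100 : ℝ) * Real.cos u * Real.sin u)
      * (Real.sin_sq_add_cos_sq u))


lemma intPyQq : ∫ u in (0:ℝ)..(2*π), (pyF u * qqF u) = 2*π*(95564377/96000000 : ℝ) := by
  have key : ∀ u : ℝ, HasDerivAt (fun x : ℝ => Real.sin x * ((-466729607/472500000 : ℝ) + (-597143/96000000 : ℝ) * Real.cos x + (-2142023/236250000 : ℝ) * Real.cos x ^ 2 + (1057897/144000000 : ℝ) * Real.cos x ^ 3 + (55901/157500000 : ℝ) * Real.cos x ^ 4 + (13927/180000000 : ℝ) * Real.cos x ^ 5 + (-1553/9450000 : ℝ) * Real.cos x ^ 6 + (71/30000000 : ℝ) * Real.cos x ^ 7 + (-1/337500 : ℝ) * Real.cos x ^ 8 + (-1/625000 : ℝ) * Real.cos x ^ 9) + (95564377/96000000 : ℝ) * x)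
      ((pyF u * qqF u)) u := by
    intro u
    have hpoly := ((((((((((hasDerivAt_const u (-466729607/472500000 : ℝ)).add ((Real.hasDerivAt_cos u).const_mul (-597143/96000000 : ℝ))).add (((Real.hasDerivAt_cos u).pow 2).const_mul (-2142023/236250000 : ℝ))).add (((Real.hasDerivAt_cos u).pow 3).const_mul (1057897/144000000 : ℝ))).add (((Real.hasDerivAt_cos u).pow 4).const_mul (55901/157500000 : ℝ))).add (((Real.hasDerivAt_cos u).pow 5).const_mul (13927/180000000 : ℝ))).add (((Real.hasDerivAt_cos u).pow 6).const_mul (-1553/9450000 : ℝ))).add (((Real.hasDerivAt_cos u).pow 7).const_mul (71/30000000 : ℝ))).add (((Real.hasDerivAt_cos u).pow 8).const_mul (-1/337500 : ℝ))).add (((Real.hasDerivAt_cos u).pow 9).const_mul (-1/625000 : ℝ)))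
    have h := ((Real.hasDerivAt_sin u).mul hpoly).add ((hasDerivAt_id u).const_mul (95564377/96000000 : ℝ))
    exact congr_d h (by
      simp only [pyF, qqF, ppF, rhoF, Pi.add_apply, Pi.pow_apply]
      simp only [c2, s2, c3, s3, c4, s4]
      linear_combination ((1459/32000000 : ℝ) + (-713/600000 : ℝ) * Real.sin u ^ 2 + (-103/8000000 : ℝ) * Real.sin u ^ 4 + (-1/8000000 : ℝ) * Real.sin u ^ 6 + (3407893/472500000 : ℝ) * Real.cos u + (867/2000000 : ℝ) * Real.cos u * Real.sin u ^ 2 + (-157/4000000 : ℝ) * Real.cos u * Real.sin u ^ 4 + (-3/4000000 : ℝ) * Real.cos u * Real.sin u ^ 6 + (61417/48000000 : ℝ) * Real.cos u ^ 2 + (2203/4000000 : ℝ) * Real.cos u ^ 2 * Real.sin u ^ 2 + (3/4000000 : ℝ) * Real.cos u ^ 2 * Real.sin u ^ 4 + (-9/8000000 : ℝ) * Real.cos u ^ 2 * Real.sin u ^ 6 + (-115579/630000000 : ℝ) * Real.cos u ^ 3 + (-1817/3000000 : ℝ) * Real.cos u ^ 3 * Real.sin u ^ 2 + (43/4000000 :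 ℝ) * Real.cos u ^ 3 * Real.sin u ^ 4 + (-10693/72000000 : ℝ) * Real.cos u ^ 4 + (39/8000000 : ℝ) * Real.cos u ^ 4 * Real.sin u ^ 2 + (69/8000000 : ℝ) * Real.cos u ^ 4 * Real.sin u ^ 4 + (4043/50400000 : ℝ) * Real.cos u ^ 5 + (-89/4000000 : ℝ) * Real.cos u ^ 5 * Real.sin u ^ 2 + (-11/10000000 : ℝ) * Real.cos u ^ 6 + (-23/1600000 : ℝ) * Real.cos u ^ 6 * Real.sin u ^ 2 + (11/4320000 : ℝ) * Real.cos u ^ 7 + (59/40000000 : ℝ) * Real.cos u ^ 8) * (Real.sin_sq_add_cos_sq u))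
  rw [intervalIntegral.integral_eq_sub_of_hasDerivAt (fun u _ => key u)
    (Continuous.intervalIntegrable (cont_py.mul cont_qq) 0 (2*π))]
  simp [Real.sin_two_pi]
  ring

lemma intPyRho : ∫ u in (0:ℝ)..(2*π), (pyF u * rhoF u) = 2*π*(238901/240000 : ℝ) := by
  have key : ∀ u : ℝ, HasDerivAt (fun x : ℝ => Real.sin x * ((-2102267/2100000 : ℝ) + (3281/240000 : ℝ) * Real.cos x + (9209/2100000 : ℝ) * Real.cos x ^ 2 + (-889/72000 : ℝ) * Real.cos x ^ 3 + (89/1050000 : ℝ) * Real.cos x ^ 4 + (-7/90000 : ℝ) * Real.cos x ^ 5 + (-1/17500 : ℝ) * Real.cos x ^ 6) + (238901/240000 : ℝ) * x)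
      ((pyF u * rhoF u)) u := by
    intro u
    have hpoly := (((((((hasDerivAt_const u (-2102267/2100000 : ℝ)).add ((Real.hasDerivAt_cos u).const_mul (3281/240000 : ℝ))).add (((Real.hasDerivAt_cos u).pow 2).const_mul (9209/2100000 : ℝ))).add (((Real.hasDerivAt_cos u).pow 3).const_mul (-889/72000 : ℝ))).add (((Real.hasDerivAt_cos u).pow 4).const_mul (89/1050000 : ℝ))).add (((Real.hasDerivAt_cos u).pow 5).const_mul (-7/90000 : ℝ))).add (((Real.hasDerivAt_cos u).pow 6).const_mul (-1/17500 : ℝ)))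
    have h := ((Real.hasDerivAt_sin u).mul hpoly).add ((hasDerivAt_id u).const_mul (238901/240000 : ℝ))
    exact congr_d h (by
      simp only [pyF, qqF, ppF, rhoF, Pi.add_apply, Pi.pow_apply]
      simp only [c2, s2, c3, s3, c4, s4]
      linear_combination ((1/240000 : ℝ) + (-97/80000 : ℝ) * Real.sin u ^ 2 + (1/80000 : ℝ) * Real.sin u ^ 4 + (-12767/2100000 : ℝ) * Real.cos u + (1/16000 : ℝ) * Real.cos u * Real.sin u ^ 2 + (3/80000 : ℝ) * Real.cos u * Real.sin u ^ 4 + (293/240000 : ℝ) * Real.cos u ^ 2 + (-1/4000 : ℝ) * Real.cos u ^ 2 * Real.sin u ^ 2 + (-89/2800000 : ℝ) * Real.cos u ^ 3 + (-11/40000 : ℝ) * Real.cos u ^ 3 * Real.sin u ^ 2 + (7/144000 : ℝ) * Real.cos u ^ 4 + (1/22400 : ℝ) * Real.cos u ^ 5) * (Real.sin_sq_add_cos_sq u))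
  rw [intervalIntegral.integral_eq_sub_of_hasDerivAt (fun u _ => key u)
    (Continuous.intervalIntegrable (cont_py.mul cont_rho) 0 (2*π))]
  simp [Real.sin_two_pi]
  ring

lemma intQq : ∫ u in (0:ℝ)..(2*π), qqF u = 2*π*(10001/10000 : ℝ) := by
  have key : ∀ u : ℝ, HasDerivAt (fun x : ℝ => Real.sin x * ((259/75000 : ℝ) + (-1/100 : ℝ) * Real.cos x + (-509/37500 : ℝ) * Real.cos x ^ 2 + (-1/6000 : ℝ) * Real.cos x ^ 3 + (1/3125 : ℝ) * Real.cos x ^ 4 + (1/3750 : ℝ) * Real.cos x ^ 5) + (10001/10000 : ℝ) * x)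
      (qqF u) u := by
    intro u
    have hpoly := ((((((hasDerivAt_const u (259/75000 : ℝ)).add ((Real.hasDerivAt_cos u).const_mul (-1/100 : ℝ))).add (((Real.hasDerivAt_cos u).pow 2).const_mul (-509/37500 : ℝ))).add (((Real.hasDerivAt_cos u).pow 3).const_mul (-1/6000 : ℝ))).add (((Real.hasDerivAt_cos u).pow 4).const_mul (1/3125 : ℝ))).add (((Real.hasDerivAt_cos u).pow 5).const_mul (1/3750 : ℝ)))
    have h := ((Real.hasDerivAt_sin u).mul hpoly).add ((hasDerivAt_id u).const_mul (10001/10000 : ℝ))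
    exact congr_d h (by
      simp only [pyF, qqF, ppF, rhoF, Pi.add_apply, Pi.pow_apply]
      simp only [c2, s2, c3, s3, c4, s4]
      linear_combination ((1/10000 : ℝ) + (1/10000 : ℝ) * Real.sin u ^ 2 + (259/75000 : ℝ) * Real.cos u + (3/5000 : ℝ) * Real.cos u * Real.sin u ^ 2 + (1/10000 : ℝ) * Real.cos u ^ 2 + (9/10000 : ℝ) * Real.cos u ^ 2 * Real.sin u ^ 2 + (-3/25000 : ℝ) * Real.cos u ^ 3 + (-1/6000 : ℝ) * Real.cos u ^ 4) * (Real.sin_sq_add_cos_sq u))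
  rw [intervalIntegral.integral_eq_sub_of_hasDerivAt (fun u _ => key u)
    (Continuous.intervalIntegrable cont_qq 0 (2*π))]
  simp [Real.sin_two_pi]
  ring

lemma intPp2 : ∫ u in (0:ℝ)..(2*π), (ppF u ^ 2) = 2*π*(1/10000 : ℝ) := by
  have key : ∀ u : ℝ, HasDerivAt (fun x : ℝ => Real.sin x * ((3/25000 : ℝ) + (-3/12500 : ℝ) * Real.cos x ^ 2 + (-1/6000 : ℝ) * Real.cos x ^ 3 + (1/3125 : ℝ) * Real.cos x ^ 4 + (1/3750 : ℝ) * Real.cos x ^ 5) + (1/10000 : ℝ) * x)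
      ((ppF u ^ 2)) u := by
    intro u
    have hpoly := (((((hasDerivAt_const u (3/25000 : ℝ)).add (((Real.hasDerivAt_cos u).pow 2).const_mul (-3/12500 : ℝ))).add (((Real.hasDerivAt_cos u).pow 3).const_mul (-1/6000 : ℝ))).add (((Real.hasDerivAt_cos u).pow 4).const_mul (1/3125 : ℝ))).add (((Real.hasDerivAt_cos u).pow 5).const_mul (1/3750 : ℝ)))
    have h := ((Real.hasDerivAt_sin u).mul hpoly).add ((hasDerivAt_id u).const_mul (1/10000 : ℝ))
    exact congr_d h (by
      simp only [pyF, qqF, ppF, rhoF, Pi.add_apply, Pi.pow_apply]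
      simp only [c2, s2, c3, s3, c4, s4]
      linear_combination ((1/10000 : ℝ) + (1/10000 : ℝ) * Real.sin u ^ 2 + (3/25000 : ℝ) * Real.cos u + (3/5000 : ℝ) * Real.cos u * Real.sin u ^ 2 + (1/10000 : ℝ) * Real.cos u ^ 2 + (9/10000 : ℝ) * Real.cos u ^ 2 * Real.sin u ^ 2 + (-3/25000 : ℝ) * Real.cos u ^ 3 + (-1/6000 : ℝ) * Real.cos u ^ 4) * (Real.sin_sq_add_cos_sq u))
  rw [intervalIntegral.integral_eq_sub_of_hasDerivAt (fun u _ => key u)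
    (Continuous.intervalIntegrable (cont_pp.pow 2) 0 (2*π))]
  simp [Real.sin_two_pi]
  ring
/-! ### Periodicity -/

lemma sin_per2 (u : ℝ) : Real.sin (2*(u + 2*π)) = Real.sin (2*u) := by
  rw [show (2:ℝ)*(u + 2*π) = 2*u + 2*π + 2*π by ring, Real.sin_add_two_pi, Real.sin_add_two_pi]

lemma sin_per3 (u : ℝ) : Real.sin (3*(u + 2*π)) = Real.sin (3*u) := by
  rw [show (3:ℝ)*(u + 2*π) = 3*u + 2*π + 2*π + 2*π by ring, Real.sin_add_two_pi,
    Real.sin_add_two_pi, Real.sin_add_two_pi]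

lemma sin_per4 (u : ℝ) : Real.sin (4*(u + 2*π)) = Real.sin (4*u) := by
  rw [show (4:ℝ)*(u + 2*π) = 4*u + 2*π + 2*π + 2*π + 2*π by ring, Real.sin_add_two_pi,
    Real.sin_add_two_pi, Real.sin_add_two_pi, Real.sin_add_two_pi]

lemma cos_per2 (u : ℝ) : Real.cos (2*(u + 2*π)) = Real.cos (2*u) := by
  rw [show (2:ℝ)*(u + 2*π) = 2*u + 2*π + 2*π by ring, Real.cos_add_two_pi, Real.cos_add_two_pi]

lemma cos_per3 (u : ℝ) : Real.cos (3*(u + 2*π)) = Real.cos (3*u) := by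
  rw [show (3:ℝ)*(u + 2*π) = 3*u + 2*π + 2*π + 2*π by ring, Real.cos_add_two_pi,
    Real.cos_add_two_pi, Real.cos_add_two_pi]

lemma cos_per4 (u : ℝ) : Real.cos (4*(u + 2*π)) = Real.cos (4*u) := by
  rw [show (4:ℝ)*(u + 2*π) = 4*u + 2*π + 2*π + 2*π + 2*π by ring, Real.cos_add_two_pi,
    Real.cos_add_two_pi, Real.cos_add_two_pi, Real.cos_add_two_pi]

lemma px_per (u : ℝ) : pxF (u + 2*π) = pxF u := by
  simp only [pxF, sin_per2, sin_per3, sin_per4, Real.sin_add_two_pi]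

lemma py_per (u : ℝ) : pyF (u + 2*π) = pyF u := by
  simp only [pyF, cos_per2, cos_per3, cos_per4, Real.cos_add_two_pi]

lemma bet_per (u : ℝ) : betF (u + 2*π) = betF u + 2*π := by
  simp only [betF, sin_per2, sin_per3]; ring

lemma bet_zero : betF 0 = 0 := by
  simp [betF]

lemma bet_two_pi : betF (2*π) = 2*π := by
  have h := bet_per 0; rw [bet_zero] at h
  simpa using h

/-! ### The inverse `alp` of `betF` -/

lemma bet_contDiff {n : WithTop ℕ∞} : ContDiff ℝ n betF := by
  unfold betF
  exact (contDiff_id.add (contDiff_const.mul (Real.contDiff_sin.comp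
    (contDiff_const.mul contDiff_id)))).add
    (contDiff_const.mul (Real.contDiff_sin.comp (contDiff_const.mul contDiff_id)))

lemma bet_mono : StrictMono betF := by
  apply strictMono_of_deriv_pos
  intro x
  rw [(hd_bet x).deriv]
  exact rho_pos x

lemma bet_surj : Function.Surjective betF := by
  have hb : ∀ u : ℝ, betF u ≤ u + 1 := by
    intro u
    have h1 := Real.sin_le_one (2*u); have h2 := Real.sin_le_one (3*u)
    simp only [betF]; linarith
  have ha : ∀ u : ℝ, u - 1 ≤ betF u := by
    intro u
    have h1 := Real.neg_one_le_sin (2*u); have h2 := Real.neg_one_le_sin (3*u)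
    simp only [betF]; linarith
  refine Continuous.surjective (bet_contDiff (n := 1)).continuous ?_ ?_
  · apply Filter.tendsto_atTop_mono ha
    simpa [sub_eq_add_neg] using Filter.tendsto_atTop_add_const_right _ (-1 : ℝ) Filter.tendsto_id
  · apply Filter.tendsto_atBot_mono hb
    simpa using Filter.tendsto_atBot_add_const_right _ (1 : ℝ) Filter.tendsto_id

noncomputable def betIso : ℝ ≃o ℝ := StrictMono.orderIsoOfSurjective betF bet_mono bet_surj

noncomputable def alp : ℝ → ℝ := fun θ => betIso.symm θ

lemma alp_bet (u : ℝ) : alp (betF u) = u := by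
  have : betF u = betIso u := rfl
  rw [alp, this, betIso.symm_apply_apply]

lemma bet_alp (θ : ℝ) : betF (alp θ) = θ := by
  have : betF (alp θ) = betIso (betIso.symm θ) := rfl
  rw [this, betIso.apply_symm_apply]

lemma alp_mono : StrictMono alp := fun _ _ h => betIso.symm.strictMono h

lemma alp_cont : Continuous alp := betIso.symm.continuous

lemma alp_contDiff {n : WithTop ℕ∞} : ContDiff ℝ n alp := by
  have h := Homeomorph.contDiff_symm_deriv (betIso.toHomeomorph) (f' := rhoF)
    (fun x => rho_ne x) (fun x => hd_bet x) (bet_contDiff (n := n))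
  exact h

lemma alp_hasDerivAt (θ : ℝ) : HasDerivAt alp ((rhoF (alp θ))⁻¹) θ := by
  have hdiff : DifferentiableAt ℝ alp θ :=
    ((alp_contDiff (n := 1)).differentiable one_ne_zero).differentiableAt
  have h2 : HasDerivAt alp (deriv alp θ) θ := hdiff.hasDerivAt
  have h3 := (hd_bet (alp θ)).comp θ h2
  have h4 : betF ∘ alp = id := funext fun θ => bet_alp θ
  rw [h4] at h3
  have h5 : rhoF (alp θ) * deriv alp θ = 1 := by
    have := (hasDerivAt_id θ).unique h3
    simpa using this.symm
  have h6 : deriv alp θ = (rhoF (alp θ))⁻¹ :=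
    eq_inv_of_mul_eq_one_left (by rw [mul_comm]; exact h5)
  rwa [h6] at h2

lemma alp_per (θ : ℝ) : alp (θ + 2*π) = alp θ + 2*π := by
  apply bet_mono.injective
  rw [bet_alp, bet_per, bet_alp]

lemma alp_zero : alp 0 = 0 := by
  conv_lhs => rw [← bet_zero]
  exact alp_bet 0

lemma alp_two_pi : alp (2*π) = 2*π := by
  conv_lhs => rw [← bet_two_pi]
  exact alp_bet (2*π)

/-! ### Injectivity of the curve -/

lemma keyW {v w : ℝ} (hvw : v < w) (hle : w ≤ v + π) (hx : pxF v = pxF w)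
    (hy : pyF v = pyF w) : False := by
  set W : ℝ → ℝ := fun t => (-Real.sin v) * pxF t + Real.cos v * pyF t with hW
  have hWd : ∀ t : ℝ, HasDerivAt W (Real.sin (t - v) * rhoF t) t := by
    intro t
    have h := ((hd_px t).const_mul (-Real.sin v)).add ((hd_py t).const_mul (Real.cos v))
    exact congr_d h (by rw [Real.sin_sub]; ring)
  have hcont : Continuous fun t => Real.sin (t - v) * rhoF t := by
    unfold rhoF ppF; fun_prop
  have hint : IntervalIntegrable (fun t => Real.sin (t - v) * rhoF t)
      MeasureTheory.volume v w := hcont.intervalIntegrable _ _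
  have heq : ∫ t in v..w, Real.sin (t - v) * rhoF t = W w - W v :=
    intervalIntegral.integral_eq_sub_of_hasDerivAt (fun t _ => hWd t) hint
  have hpos : 0 < ∫ t in v..w, Real.sin (t - v) * rhoF t := by
    apply intervalIntegral.intervalIntegral_pos_of_pos_on hint _ hvw
    intro t ht
    apply mul_pos _ (rho_pos t)
    apply Real.sin_pos_of_pos_of_lt_pi
    · linarith [ht.1]
    · linarith [ht.2]
  have hWeq : W w = W v := by simp only [hW, hx, hy]
  rw [heq, hWeq] at hpos
  linarith

/-! ### The curve Φ -/

noncomputable def Phi (θ : ℝ) : EuclideanSpace ℝ (Fin 2) :=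
  (EuclideanSpace.equiv (Fin 2) ℝ).symm ![pxF (alp θ), pyF (alp θ)]

lemma E_symm_apply (v : Fin 2 → ℝ) (i : Fin 2) :
    ((EuclideanSpace.equiv (Fin 2) ℝ).symm v) i = v i := rfl

lemma norm_E (x y : ℝ) :
    ‖(EuclideanSpace.equiv (Fin 2) ℝ).symm ![x, y]‖ = Real.sqrt (x^2 + y^2) := by
  rw [EuclideanSpace.norm_eq]
  congr 1
  rw [Fin.sum_univ_two]
  simp [E_symm_apply, Real.norm_eq_abs, sq_abs]

lemma px_contDiff {n : WithTop ℕ∞} : ContDiff ℝ n pxF := by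
  unfold pxF
  exact (((contDiff_const.mul Real.contDiff_sin).add
    (contDiff_const.mul (Real.contDiff_sin.comp (contDiff_const.mul contDiff_id)))).add
    (contDiff_const.mul (Real.contDiff_sin.comp (contDiff_const.mul contDiff_id)))).add
    (contDiff_const.mul (Real.contDiff_sin.comp (contDiff_const.mul contDiff_id)))

lemma py_contDiff {n : WithTop ℕ∞} : ContDiff ℝ n pyF := by
  unfold pyF
  exact ((((contDiff_const.sub (contDiff_const.mul Real.contDiff_cos)).add
    (contDiff_const.mul (Real.contDiff_cos.comp (contDiff_const.mul contDiff_id)))).sub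
    (contDiff_const.mul (Real.contDiff_cos.comp (contDiff_const.mul contDiff_id)))).sub
    (contDiff_const.mul (Real.contDiff_cos.comp (contDiff_const.mul contDiff_id))))

lemma Phi_contDiff : ContDiff ℝ (⊤ : WithTop ℕ∞) Phi := by
  apply (ContinuousLinearEquiv.contDiff _).comp
  apply contDiff_pi.mpr
  intro i
  fin_cases i
  · simpa [Function.comp_def] using px_contDiff.comp alp_contDiff
  · simpa [Function.comp_def] using py_contDiff.comp alp_contDiff

lemma Phi_periodic : Function.Periodic Phi (2*π) := by
  intro θ
  simp only [Phi, alp_per, px_per, py_per]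

lemma hd_px_alp (θ : ℝ) :
    HasDerivAt (fun θ => pxF (alp θ)) (Real.cos (alp θ)) θ := by
  have h := (hd_px (alp θ)).comp θ (alp_hasDerivAt θ)
  exact congr_d h (by rw [mul_assoc, mul_inv_cancel₀ (rho_ne (alp θ)), mul_one])

lemma hd_py_alp (θ : ℝ) :
    HasDerivAt (fun θ => pyF (alp θ)) (Real.sin (alp θ)) θ := by
  have h := (hd_py (alp θ)).comp θ (alp_hasDerivAt θ)
  exact congr_d h (by rw [mul_assoc, mul_inv_cancel₀ (rho_ne (alp θ)), mul_one])

lemma hd_Phi (θ : ℝ) : HasDerivAt Phi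
    ((EuclideanSpace.equiv (Fin 2) ℝ).symm ![Real.cos (alp θ), Real.sin (alp θ)]) θ := by
  have hpi : HasDerivAt (fun θ => (![pxF (alp θ), pyF (alp θ)] : Fin 2 → ℝ))
      ![Real.cos (alp θ), Real.sin (alp θ)] θ := by
    rw [hasDerivAt_pi]
    intro i
    fin_cases i
    · simpa using hd_px_alp θ
    · simpa using hd_py_alp θ
  have h := ((EuclideanSpace.equiv (Fin 2) ℝ).symm.toContinuousLinearMap.hasFDerivAt
    (x := (![pxF (alp θ), pyF (alp θ)] : Fin 2 → ℝ))).comp_hasDerivAt θ hpi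
  unfold Phi
  simpa [Function.comp_def] using h

lemma deriv_Phi : deriv Phi
    = fun θ => (EuclideanSpace.equiv (Fin 2) ℝ).symm ![Real.cos (alp θ), Real.sin (alp θ)] :=
  funext fun θ => (hd_Phi θ).deriv

lemma norm_dPhi (θ : ℝ) : ‖deriv Phi θ‖ = 1 := by
  rw [deriv_Phi, norm_E]
  rw [Real.cos_sq_add_sin_sq, Real.sqrt_one]

lemma hd_dPhi (θ : ℝ) : HasDerivAt (deriv Phi)
    ((EuclideanSpace.equiv (Fin 2) ℝ).symm
      ![-Real.sin (alp θ) * (rhoF (alp θ))⁻¹, Real.cos (alp θ) * (rhoF (alp θ))⁻¹]) θ := by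
  rw [deriv_Phi]
  have hx : HasDerivAt (fun θ => Real.cos (alp θ)) (-Real.sin (alp θ) * (rhoF (alp θ))⁻¹) θ := by
    have h := (Real.hasDerivAt_cos (alp θ)).comp θ (alp_hasDerivAt θ)
    exact congr_d h (by ring)
  have hy : HasDerivAt (fun θ => Real.sin (alp θ)) (Real.cos (alp θ) * (rhoF (alp θ))⁻¹) θ := by
    have h := (Real.hasDerivAt_sin (alp θ)).comp θ (alp_hasDerivAt θ)
    exact congr_d h (by ring)
  have hpi : HasDerivAt (fun θ => (![Real.cos (alp θ), Real.sin (alp θ)] : Fin 2 → ℝ))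
      ![-Real.sin (alp θ) * (rhoF (alp θ))⁻¹, Real.cos (alp θ) * (rhoF (alp θ))⁻¹] θ := by
    rw [hasDerivAt_pi]
    intro i
    fin_cases i
    · simpa using hx
    · simpa using hy
  have h := ((EuclideanSpace.equiv (Fin 2) ℝ).symm.toContinuousLinearMap.hasFDerivAt
    (x := (![Real.cos (alp θ), Real.sin (alp θ)] : Fin 2 → ℝ))).comp_hasDerivAt θ hpi
  simpa [Function.comp_def] using h

lemma norm_ddPhi (θ : ℝ) : ‖deriv (deriv Phi) θ‖^2 = ((rhoF (alp θ))⁻¹)^2 := by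
  rw [(hd_dPhi θ).deriv, norm_E, Real.sq_sqrt (by positivity)]
  linear_combination (((rhoF (alp θ))⁻¹)^2) * (Real.sin_sq_add_cos_sq (alp θ))

lemma inner_Phi (θ : ℝ) : ⟪Phi θ, (EuclideanSpace.single (1 : Fin 2) (1:ℝ))⟫ = pyF (alp θ) := by
  rw [EuclideanSpace.inner_single_right]
  simp [Phi, E_symm_apply]

/-! ### Injectivity -/

lemma alp_mem {θ : ℝ} (h : θ ∈ Set.Ico (0:ℝ) (2*π)) : alp θ ∈ Set.Ico (0:ℝ) (2*π) := by
  constructor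
  · rw [← alp_zero]; exact (alp_mono.le_iff_le).mpr h.1
  · rw [← alp_two_pi]; exact alp_mono h.2

lemma keyW' {v w : ℝ} (hvw : v < w) (hw2 : w < 2*π) (hv : 0 ≤ v) (hx : pxF v = pxF w)
    (hy : pyF v = pyF w) : False := by
  by_cases hle : w ≤ v + π
  · exact keyW hvw hle hx hy
  · push_neg at hle
    have h1 : w < v + 2*π := by
      have hpi := Real.pi_pos; linarith
    have h2 : v + 2*π ≤ w + π := by linarith
    exact keyW h1 h2 (by rw [← px_per v] at hx; exact hx.symm)
      (by rw [← py_per v] at hy; exact hy.symm)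

lemma Phi_injOn : Set.InjOn Phi (Set.Ico (0:ℝ) (2*π)) := by
  intro θ1 h1 θ2 h2 heq
  have hcomp : ∀ i, (![pxF (alp θ1), pyF (alp θ1)] : Fin 2 → ℝ) i
      = ![pxF (alp θ2), pyF (alp θ2)] i := by
    intro i
    have h := congrArg (fun v : EuclideanSpace ℝ (Fin 2) => v i) heq
    simpa [Phi, E_symm_apply] using h
  have hx := hcomp 0
  have hy := hcomp 1
  simp only [Matrix.cons_val_zero, Matrix.cons_val_one, Matrix.head_cons] at hx hy
  have hm1 := alp_mem h1
  have hm2 := alp_mem h2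
  rcases lt_trichotomy (alp θ1) (alp θ2) with hlt | heq' | hgt
  · exact absurd (keyW' hlt hm2.2 hm1.1 hx hy) (by simp)
  · exact alp_mono.injective heq'
  · exact absurd (keyW' hgt hm1.2 hm2.1 hx.symm hy.symm) (by simp)

/-! ### Change of variables -/

lemma conv_int (g : ℝ → ℝ) (hg : Continuous g) :
    ∫ θ in (0:ℝ)..(2*π), g (alp θ) = ∫ u in (0:ℝ)..(2*π), rhoF u * g u := by
  have h := intervalIntegral.integral_comp_smul_deriv (a := (0:ℝ)) (b := 2*π)
    (f := betF) (f' := rhoF) (g := fun θ => g (alp θ))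
    (fun x _ => hd_bet x) cont_rho.continuousOn (hg.comp alp_cont)
  rw [bet_zero, bet_two_pi] at h
  rw [← h]
  apply intervalIntegral.integral_congr
  intro x _
  simp [Function.comp, alp_bet, smul_eq_mul]

/-! ### Error bounds -/

lemma rho_inv_le (u : ℝ) : (rhoF u)⁻¹ ≤ 50/49 := by
  rw [show (50:ℝ)/49 = (49/50)⁻¹ by norm_num]
  exact inv_anti₀ (by norm_num) (rho_ge u)

lemma pt_split (u : ℝ) : (rhoF u)⁻¹ - qqF u = -(ppF u ^ 3 * (rhoF u)⁻¹) := by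
  have hr := rho_ne u
  field_simp
  simp only [qqF, rhoF]
  ring

lemma pt_bound_inv (u : ℝ) : |(rhoF u)⁻¹ - qqF u| ≤ 1/49 * ppF u ^ 2 := by
  rw [pt_split, abs_neg, abs_mul]
  have h1 : |ppF u ^ 3| ≤ 1/50 * ppF u ^ 2 := by
    have := pp_abs_le u
    have habs := abs_nonneg (ppF u)
    calc |ppF u ^ 3| = |ppF u| * ppF u ^ 2 := by
          rw [show ppF u ^ 3 = ppF u * ppF u ^ 2 by ring, abs_mul,
            abs_of_nonneg (sq_nonneg (ppF u))]
      _ ≤ 1/50 * ppF u ^ 2 := by nlinarith [sq_nonneg (ppF u)]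
  have h2 : |(rhoF u)⁻¹| ≤ 50/49 := by
    rw [abs_of_pos (inv_pos.mpr (rho_pos u))]
    exact rho_inv_le u
  have h3 : (0:ℝ) ≤ |ppF u ^ 3| := abs_nonneg _
  nlinarith [sq_nonneg (ppF u), abs_nonneg ((rhoF u)⁻¹)]

lemma pt_bound_py (u : ℝ) :
    |pyF u * (rhoF u)⁻¹ - pyF u * qqF u| ≤ 479/11760 * ppF u ^ 2 := by
  have h : pyF u * (rhoF u)⁻¹ - pyF u * qqF u = pyF u * ((rhoF u)⁻¹ - qqF u) := by ring
  rw [h, abs_mul]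
  have h1 := py_abs_le u
  have h2 := pt_bound_inv u
  have h3 := abs_nonneg (pyF u)
  have h4 := abs_nonneg ((rhoF u)⁻¹ - qqF u)
  nlinarith [sq_nonneg (ppF u)]

lemma int_sub_eq (f g : ℝ → ℝ) (hf : Continuous f) (hg : Continuous g) :
    (∫ u in (0:ℝ)..(2*π), f u) - ∫ u in (0:ℝ)..(2*π), g u
      = ∫ u in (0:ℝ)..(2*π), (f u - g u) :=
  (intervalIntegral.integral_sub (hf.intervalIntegrable _ _) (hg.intervalIntegrable _ _)).symm

lemma abs_int_le (f b : ℝ → ℝ) (hf : Continuous f) (hb : Continuous b)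
    (hle : ∀ u, |f u| ≤ b u) :
    |∫ u in (0:ℝ)..(2*π), f u| ≤ ∫ u in (0:ℝ)..(2*π), b u := by
  have h2π : (0:ℝ) ≤ 2*π := by positivity
  calc |∫ u in (0:ℝ)..(2*π), f u| ≤ ∫ u in (0:ℝ)..(2*π), |f u| :=
        intervalIntegral.abs_integral_le_integral_abs h2π
    _ ≤ ∫ u in (0:ℝ)..(2*π), b u := by
        apply intervalIntegral.integral_mono_on h2π
          (hf.abs.intervalIntegrable _ _) (hb.intervalIntegrable _ _)
        intro x _
        exact hle x

lemma J_err : |(∫ u in (0:ℝ)..(2*π), pyF u * (rhoF u)⁻¹) - 2*π*(95564377/96000000 : ℝ)|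
    ≤ 479/11760 * (2*π*(1/10000 : ℝ)) := by
  rw [← intPyQq, int_sub_eq (fun u => pyF u * (rhoF u)⁻¹) (fun u => pyF u * qqF u) (by exact cont_py.mul cont_rho_inv) (cont_py.mul cont_qq)]
  have h := abs_int_le (fun u => pyF u * (rhoF u)⁻¹ - pyF u * qqF u)
    (fun u => 479/11760 * ppF u ^ 2)
    ((cont_py.mul cont_rho_inv).sub (cont_py.mul cont_qq))
    (continuous_const.mul (cont_pp.pow 2))
    pt_bound_py
  calc |∫ u in (0:ℝ)..(2*π), (pyF u * (rhoF u)⁻¹ - pyF u * qqF u)|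
      ≤ ∫ u in (0:ℝ)..(2*π), 479/11760 * ppF u ^ 2 := h
    _ = 479/11760 * (2*π*(1/10000 : ℝ)) := by
        rw [intervalIntegral.integral_const_mul, intPp2]

lemma T_err : |(∫ u in (0:ℝ)..(2*π), (rhoF u)⁻¹) - 2*π*(10001/10000 : ℝ)|
    ≤ 1/49 * (2*π*(1/10000 : ℝ)) := by
  rw [← intQq, int_sub_eq _ _ cont_rho_inv cont_qq]
  have h := abs_int_le (fun u => (rhoF u)⁻¹ - qqF u) (fun u => 1/49 * ppF u ^ 2)
    (cont_rho_inv.sub cont_qq) (continuous_const.mul (cont_pp.pow 2)) pt_bound_inv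
  calc |∫ u in (0:ℝ)..(2*π), ((rhoF u)⁻¹ - qqF u)|
      ≤ ∫ u in (0:ℝ)..(2*π), 1/49 * ppF u ^ 2 := h
    _ = 1/49 * (2*π*(1/10000 : ℝ)) := by
        rw [intervalIntegral.integral_const_mul, intPp2]

end CurveCE

open CurveCE in
/-- There exist a smooth constant-speed embedded closed plane curve `Φ` (smooth, `2π`-periodic,
injective on `[0, 2π)`, with constant positive speed) and a vector `u*` such that
`∫₀^{2π} (Φ·u*)|Φ''|² dθ ≠ (1/(2π))(∫₀^{2π} Φ·u* dθ)(∫₀^{2π} |Φ''|² dθ)`. -/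
theorem exists_counterexample_translation_variation :
    ∃ (Φ : ℝ → EuclideanSpace ℝ (Fin 2)) (u : EuclideanSpace ℝ (Fin 2)),
      ContDiff ℝ (⊤ : ℕ∞) Φ ∧
      Function.Periodic Φ (2 * π) ∧
      Set.InjOn Φ (Set.Ico (0 : ℝ) (2 * π)) ∧
      (∃ c : ℝ, 0 < c ∧ ∀ θ, ‖deriv Φ θ‖ = c) ∧
      ∫ θ in (0 : ℝ)..(2 * π), ⟪Φ θ, u⟫ * ‖deriv (deriv Φ) θ‖ ^ 2 ≠
        (1 / (2 * π)) * (∫ θ in (0 : ℝ)..(2 * π), ⟪Φ θ, u⟫) *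
          (∫ θ in (0 : ℝ)..(2 * π), ‖deriv (deriv Φ) θ‖ ^ 2) := by
  refine ⟨Phi, EuclideanSpace.single (1 : Fin 2) (1:ℝ), (Phi_contDiff.of_le le_top), Phi_periodic, Phi_injOn,
    ⟨1, one_pos, norm_dPhi⟩, ?_⟩
  have hπ := Real.pi_pos
  -- rewrite the three integrals
  have hA : ∫ θ in (0:ℝ)..(2*π), ⟪Phi θ, EuclideanSpace.single (1 : Fin 2) (1:ℝ)⟫
        * ‖deriv (deriv Phi) θ‖ ^ 2
      = ∫ u in (0:ℝ)..(2*π), pyF u * (rhoF u)⁻¹ := by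
    have e1 : ∀ θ : ℝ, ⟪Phi θ, EuclideanSpace.single (1 : Fin 2) (1:ℝ)⟫
        * ‖deriv (deriv Phi) θ‖ ^ 2
        = (fun v => pyF v * ((rhoF v)⁻¹)^2) (alp θ) := fun θ => by
      rw [inner_Phi, norm_ddPhi]
    rw [intervalIntegral.integral_congr (fun θ _ => e1 θ),
      conv_int (fun v => pyF v * ((rhoF v)⁻¹)^2) (cont_py.mul (cont_rho_inv.pow 2))]
    apply intervalIntegral.integral_congr
    intro x _
    have := rho_ne x
    field_simp
  have hB : ∫ θ in (0:ℝ)..(2*π), ⟪Phi θ, EuclideanSpace.single (1 : Fin 2) (1:ℝ)⟫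
      = 2*π*(238901/240000 : ℝ) := by
    have e1 : ∀ θ : ℝ, ⟪Phi θ, EuclideanSpace.single (1 : Fin 2) (1:ℝ)⟫
        = (fun v => pyF v) (alp θ) := fun θ => inner_Phi θ
    rw [intervalIntegral.integral_congr (fun θ _ => e1 θ), conv_int _ cont_py, ← intPyRho]
    apply intervalIntegral.integral_congr
    intro x _
    simp only [rhoF]
    ring
  have hC : ∫ θ in (0:ℝ)..(2*π), ‖deriv (deriv Phi) θ‖ ^ 2
      = ∫ u in (0:ℝ)..(2*π), (rhoF u)⁻¹ := by
    have e1 : ∀ θ : ℝ, ‖deriv (deriv Phi) θ‖ ^ 2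
        = (fun v => ((rhoF v)⁻¹)^2) (alp θ) := fun θ => norm_ddPhi θ
    rw [intervalIntegral.integral_congr (fun θ _ => e1 θ), conv_int (fun v => ((rhoF v)⁻¹)^2) (cont_rho_inv.pow 2)]
    apply intervalIntegral.integral_congr
    intro x _
    have := rho_ne x
    field_simp
  rw [hA, hB, hC]
  intro heq
  set J := ∫ u in (0:ℝ)..(2*π), pyF u * (rhoF u)⁻¹ with hJdef
  set T := ∫ u in (0:ℝ)..(2*π), (rhoF u)⁻¹ with hTdef
  have hm2 : J = (238901/240000 : ℝ) * T := by
    have h2π : (2*π) ≠ 0 := by positivity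
    field_simp at heq
    linarith
  have hkey : 2*π*((238901:ℝ)/240000 * (10001/10000) - 95564377/96000000)
      = (J - 2*π*(95564377/96000000)) - (238901/240000 : ℝ)*(T - 2*π*(10001/10000)) := by
    rw [hm2]; ring
  have h1 := J_err
  have h2 := T_err
  rw [← hJdef] at h1
  rw [← hTdef] at h2
  have habs : |2*π*((238901:ℝ)/240000 * (10001/10000) - 95564377/96000000)|
      ≤ (238901/240000 : ℝ) * |T - 2*π*(10001/10000)| + |J - 2*π*(95564377/96000000)| := by
    rw [hkey]
    calc |(J - 2*π*(95564377/96000000)) - (238901/240000 : ℝ)*(T - 2*π*(10001/10000))|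
        ≤ |J - 2*π*(95564377/96000000)| + |(238901/240000 : ℝ)*(T - 2*π*(10001/10000))| :=
          abs_sub _ _
      _ = (238901/240000 : ℝ) * |T - 2*π*(10001/10000)| + |J - 2*π*(95564377/96000000)| := by
          rw [abs_mul, abs_of_pos (by norm_num : (0:ℝ) < 238901/240000)]; ring
  have hlhs : |2*π*((238901:ℝ)/240000 * (10001/10000) - 95564377/96000000)|
      = 2*π*(11623/200000000 : ℝ) := by
    rw [show ((238901:ℝ)/240000 * (10001/10000) - 95564377/96000000) = 11623/200000000 by
      norm_num]
    rw [abs_of_pos (by positivity)]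
  rw [hlhs] at habs
  nlinarith [habs, h1, h2, hπ]
end

section
/- Let Φ : ℝ → ℝ² be a smooth 2π-periodic map with |Φ'(θ)| ≡ l/(2π) for some constant l > 0, let T := (2π/l)Φ' be the unit tangent, N the rotation of T by π/2 (unit normal), and H := (4π²/l²)Φ'' the curvature vector. Let V : ℝ → ℝ² be smooth and 2π-periodic, and let U : ℝ → ℝ be smooth and 2π-periodic with (2π/l)² U''(θ) = V(θ)·H(θ) − (1/(2π)) ∫₀^{2π} V·H dθ for all θ. Then the vector field W(θ) := (V(θ)·N(θ)) N(θ) + (2π/l) U'(θ) T(θ) has constant tangential divergence: (2π/l) T(θ)·W'(θ) = −(1/(2π)) ∫₀^{2π} V·H dθ for every θ. -/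
open scoped Real RealInnerProductSpace

private lemma proj_hasDerivAt' {f : ℝ → EuclideanSpace ℝ (Fin 2)} {v : EuclideanSpace ℝ (Fin 2)}
    {θ : ℝ} (h : HasDerivAt f v θ) (i : Fin 2) : HasDerivAt (fun t => f t i) (v i) θ := by
  have := (EuclideanSpace.proj i (𝕜 := ℝ)).hasFDerivAt.comp_hasDerivAt θ h
  simp at this
  exact this

private lemma euclid_hasDerivAt' {f : ℝ → EuclideanSpace ℝ (Fin 2)} {v : EuclideanSpace ℝ (Fin 2)}
    {θ : ℝ} (h0 : HasDerivAt (fun t => f t 0) (v 0) θ)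
    (h1 : HasDerivAt (fun t => f t 1) (v 1) θ) : HasDerivAt f v θ := by
  have h : HasDerivAt (fun t => (PiLp.continuousLinearEquiv 2 ℝ (fun _ : Fin 2 => ℝ)) (f t))
      ((PiLp.continuousLinearEquiv 2 ℝ (fun _ : Fin 2 => ℝ)) v) θ := by
    rw [hasDerivAt_pi]
    intro i
    fin_cases i
    · exact h0
    · exact h1
  have := ((PiLp.continuousLinearEquiv 2 ℝ (fun _ : Fin 2 => ℝ)).symm.toContinuousLinearMap).hasFDerivAt.comp_hasDerivAt θ h
  exact this

/-- Along a constant-speed closed plane curve `Φ` with `|Φ'| ≡ l/(2π)`, unit tangent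
`T = (2π/l)Φ'`, unit normal `N` (rotation of `T` by `π/2`) and curvature vector
`H = (4π²/l²)Φ''`, if `U` solves `(2π/l)² U'' = V·H − (1/(2π))∫₀^{2π} V·H dθ`, then the
projected field `W = (V·N)N + (2π/l)U'T` has constant tangential divergence:
`(2π/l) T·W' ≡ −(1/(2π)) ∫₀^{2π} V·H dθ`. -/
theorem coherent_projection_constant_divergence
    (l : ℝ) (hl : 0 < l)
    (Φ : ℝ → EuclideanSpace ℝ (Fin 2)) (hΦ : ContDiff ℝ (⊤ : ℕ∞) Φ)
    (hΦper : Function.Periodic Φ (2 * π))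
    (hspeed : ∀ θ, ‖deriv Φ θ‖ = l / (2 * π))
    (T N H : ℝ → EuclideanSpace ℝ (Fin 2))
    (hT : ∀ θ, T θ = (2 * π / l) • deriv Φ θ)
    (hN : ∀ θ, N θ 0 = -(T θ 1) ∧ N θ 1 = T θ 0)
    (hH : ∀ θ, H θ = (4 * π ^ 2 / l ^ 2) • deriv (deriv Φ) θ)
    (V : ℝ → EuclideanSpace ℝ (Fin 2)) (hV : ContDiff ℝ (⊤ : ℕ∞) V)
    (hVper : Function.Periodic V (2 * π))
    (U : ℝ → ℝ) (hU : ContDiff ℝ (⊤ : ℕ∞) U) (hUper : Function.Periodic U (2 * π))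
    (hUeq : ∀ θ, (2 * π / l) ^ 2 * deriv (deriv U) θ =
      ⟪V θ, H θ⟫ - (1 / (2 * π)) * ∫ θ' in (0 : ℝ)..(2 * π), ⟪V θ', H θ'⟫)
    (W : ℝ → EuclideanSpace ℝ (Fin 2))
    (hW : ∀ θ, W θ = ⟪V θ, N θ⟫ • N θ + ((2 * π / l) * deriv U θ) • T θ) :
    ∀ θ, (2 * π / l) * ⟪T θ, deriv W θ⟫ =
      -(1 / (2 * π)) * ∫ θ' in (0 : ℝ)..(2 * π), ⟪V θ', H θ'⟫ := by
  intro θ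
  have hl' : l ≠ 0 := hl.ne'
  have hπ : (π : ℝ) ≠ 0 := Real.pi_ne_zero
  set c : ℝ := 2 * π / l with hc
  -- smoothness facts
  have hΦ' := (contDiff_infty_iff_deriv.mp (hΦ.of_le (by simp))).2
  have hU' := (contDiff_infty_iff_deriv.mp (hU.of_le (by simp))).2
  have hDD : HasDerivAt (deriv Φ) (deriv (deriv Φ) θ) θ :=
    (hΦ'.differentiable (by simp) θ).hasDerivAt
  have ha : HasDerivAt (fun t => deriv Φ t 0) (deriv (deriv Φ) θ 0) θ :=
    proj_hasDerivAt' hDD 0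
  have hb : HasDerivAt (fun t => deriv Φ t 1) (deriv (deriv Φ) θ 1) θ :=
    proj_hasDerivAt' hDD 1
  have hVD : HasDerivAt V (deriv V θ) θ := (hV.differentiable (by simp) θ).hasDerivAt
  have hp : HasDerivAt (fun t => V t 0) (deriv V θ 0) θ := proj_hasDerivAt' hVD 0
  have hq : HasDerivAt (fun t => V t 1) (deriv V θ 1) θ := proj_hasDerivAt' hVD 1
  have hu : HasDerivAt (deriv U) (deriv (deriv U) θ) θ :=
    (hU'.differentiable (by simp) θ).hasDerivAt
  -- unit speed squared
  have hunit : ∀ t, deriv Φ t 0 * deriv Φ t 0 + deriv Φ t 1 * deriv Φ t 1 = (l / (2 * π)) ^ 2 := by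
    intro t
    have h1 : ⟪deriv Φ t, deriv Φ t⟫ = (l / (2 * π)) ^ 2 := by
      rw [real_inner_self_eq_norm_sq, hspeed t]
    simp only [PiLp.inner_apply, RCLike.inner_apply, Fin.sum_univ_two, conj_trivial] at h1
    linear_combination h1
  have hunit2 : c ^ 2 * (deriv Φ θ 0 * deriv Φ θ 0 + deriv Φ θ 1 * deriv Φ θ 1) = 1 := by
    rw [hunit θ, hc]
    field_simp
  -- orthogonality of T and T'
  have horth : deriv Φ θ 0 * deriv (deriv Φ) θ 0 + deriv Φ θ 1 * deriv (deriv Φ) θ 1 = 0 := by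
    have hg : HasDerivAt (fun t => deriv Φ t 0 * deriv Φ t 0 + deriv Φ t 1 * deriv Φ t 1)
        (0 : ℝ) θ := by
      have h2 : (fun t => deriv Φ t 0 * deriv Φ t 0 + deriv Φ t 1 * deriv Φ t 1)
          = fun _ : ℝ => (l / (2 * π)) ^ 2 := funext hunit
      rw [h2]
      exact hasDerivAt_const θ _
    have hg' := (ha.mul ha).add (hb.mul hb)
    have h3 := hg.unique hg'
    linear_combination (-(1 : ℝ) / 2) * h3
  -- the ODE for U with inner product expanded
  have hVH : ⟪V θ, H θ⟫ = 4 * π ^ 2 / l ^ 2 *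
      (V θ 0 * deriv (deriv Φ) θ 0 + V θ 1 * deriv (deriv Φ) θ 1) := by
    rw [hH θ]
    simp [PiLp.inner_apply, RCLike.inner_apply, Fin.sum_univ_two, PiLp.smul_apply,
      smul_eq_mul]
    ring
  have hueq := hUeq θ
  rw [hVH] at hueq
  -- W written componentwise
  have hWeq : W = fun t => (WithLp.equiv 2 (Fin 2 → ℝ)).symm
      ![(V t 0 * -(c * deriv Φ t 1) + V t 1 * (c * deriv Φ t 0)) * -(c * deriv Φ t 1)
          + c * deriv U t * (c * deriv Φ t 0),
        (V t 0 * -(c * deriv Φ t 1) + V t 1 * (c * deriv Φ t 0)) * (c * deriv Φ t 0)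
          + c * deriv U t * (c * deriv Φ t 1)] := by
    funext t
    have hn0 := (hN t).1
    have hn1 := (hN t).2
    have ht0 : T t 0 = c * deriv Φ t 0 := by rw [hT t]; rfl
    have ht1 : T t 1 = c * deriv Φ t 1 := by rw [hT t]; rfl
    ext i
    fin_cases i
    · simp [hW t, PiLp.inner_apply, RCLike.inner_apply, Fin.sum_univ_two, hn0, hn1, ht0, ht1]
      left; ring
    · simp [hW t, PiLp.inner_apply, RCLike.inner_apply, Fin.sum_univ_two, hn0, hn1, ht0, ht1]
      left; ring
  -- derivative of the components of W
  have hW0 : HasDerivAt (fun t => (V t 0 * -(c * deriv Φ t 1) + V t 1 * (c * deriv Φ t 0))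
        * -(c * deriv Φ t 1) + c * deriv U t * (c * deriv Φ t 0))
      ((deriv V θ 0 * -(c * deriv Φ θ 1) + V θ 0 * -(c * deriv (deriv Φ) θ 1)
          + (deriv V θ 1 * (c * deriv Φ θ 0) + V θ 1 * (c * deriv (deriv Φ) θ 0)))
          * -(c * deriv Φ θ 1)
        + (V θ 0 * -(c * deriv Φ θ 1) + V θ 1 * (c * deriv Φ θ 0))
          * -(c * deriv (deriv Φ) θ 1)
        + (c * deriv (deriv U) θ * (c * deriv Φ θ 0)
          + c * deriv U θ * (c * deriv (deriv Φ) θ 0))) θ := by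
    have h := ((hp.mul ((hb.const_mul c).neg)).add (hq.mul (ha.const_mul c))).mul
        ((hb.const_mul c).neg) |>.add ((hu.const_mul c).mul (ha.const_mul c))
    convert h using 1
    all_goals rfl
  have hW1 : HasDerivAt (fun t => (V t 0 * -(c * deriv Φ t 1) + V t 1 * (c * deriv Φ t 0))
        * (c * deriv Φ t 0) + c * deriv U t * (c * deriv Φ t 1))
      ((deriv V θ 0 * -(c * deriv Φ θ 1) + V θ 0 * -(c * deriv (deriv Φ) θ 1)
          + (deriv V θ 1 * (c * deriv Φ θ 0) + V θ 1 * (c * deriv (deriv Φ) θ 0)))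
          * (c * deriv Φ θ 0)
        + (V θ 0 * -(c * deriv Φ θ 1) + V θ 1 * (c * deriv Φ θ 0))
          * (c * deriv (deriv Φ) θ 0)
        + (c * deriv (deriv U) θ * (c * deriv Φ θ 1)
          + c * deriv U θ * (c * deriv (deriv Φ) θ 1))) θ := by
    have h := ((hp.mul ((hb.const_mul c).neg)).add (hq.mul (ha.const_mul c))).mul
        (ha.const_mul c) |>.add ((hu.const_mul c).mul (hb.const_mul c))
    convert h using 1
    all_goals rfl
  -- derivative of W
  have hWd : HasDerivAt W ((WithLp.equiv 2 (Fin 2 → ℝ)).symm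
      ![(deriv V θ 0 * -(c * deriv Φ θ 1) + V θ 0 * -(c * deriv (deriv Φ) θ 1)
          + (deriv V θ 1 * (c * deriv Φ θ 0) + V θ 1 * (c * deriv (deriv Φ) θ 0)))
          * -(c * deriv Φ θ 1)
        + (V θ 0 * -(c * deriv Φ θ 1) + V θ 1 * (c * deriv Φ θ 0))
          * -(c * deriv (deriv Φ) θ 1)
        + (c * deriv (deriv U) θ * (c * deriv Φ θ 0)
          + c * deriv U θ * (c * deriv (deriv Φ) θ 0)),
        (deriv V θ 0 * -(c * deriv Φ θ 1) + V θ 0 * -(c * deriv (deriv Φ) θ 1)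
          + (deriv V θ 1 * (c * deriv Φ θ 0) + V θ 1 * (c * deriv (deriv Φ) θ 0)))
          * (c * deriv Φ θ 0)
        + (V θ 0 * -(c * deriv Φ θ 1) + V θ 1 * (c * deriv Φ θ 0))
          * (c * deriv (deriv Φ) θ 0)
        + (c * deriv (deriv U) θ * (c * deriv Φ θ 1)
          + c * deriv U θ * (c * deriv (deriv Φ) θ 1))]) θ := by
    rw [hWeq]
    exact euclid_hasDerivAt' hW0 hW1
  set I := ∫ θ' in (0 : ℝ)..(2 * π), ⟪V θ', H θ'⟫ with hI
  rw [hWd.deriv]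
  have ht0 : T θ 0 = c * deriv Φ θ 0 := by rw [hT θ]; rfl
  have ht1 : T θ 1 = c * deriv Φ θ 1 := by rw [hT θ]; rfl
  simp only [PiLp.inner_apply, RCLike.inner_apply, Fin.sum_univ_two, conj_trivial,
    WithLp.equiv_symm_apply, PiLp.toLp_apply, Matrix.cons_val_zero, Matrix.cons_val_one, Matrix.head_cons,
    ht0, ht1]
  linear_combination (c ^ 2 * deriv (deriv U) θ - c ^ 2 *
      (V θ 0 * deriv (deriv Φ) θ 0 + V θ 1 * deriv (deriv Φ) θ 1)) * hunit2
    + (c ^ 4 * deriv U θ + c ^ 4 * (V θ 0 * deriv Φ θ 0 + V θ 1 * deriv Φ θ 1)) * horth + hueq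
end

section
/- Let Φ : ℝ → ℝ² be a smooth 2π-periodic map with |Φ'(θ)| ≡ l/(2π) for some constant l > 0, let T := (2π/l)Φ' be the unit tangent, N the rotation of T by π/2, H := (4π²/l²)Φ'' the curvature vector, and κ := H·N the scalar curvature. Let W : ℝ → ℝ be smooth and 2π-periodic with ∫₀^{2π} W dθ = 0 and (2π/l)² W''(θ) = (W(θ) − 1) κ(θ)² − (1/(2π)) ∫₀^{2π} (W − 1)κ² dθ for all θ. Define the vector field G(θ) := (W(θ) − 1) H(θ) + (2π/l) W'(θ) T(θ). Then: (a) G is coherent, i.e. (2π/l) T(θ)·G'(θ) is constant in θ; and (b) for every smooth 2π-periodic V : ℝ → ℝ² such that (2π/l) T·V' is constant in θ, one has ∫₀^{2π} G(θ)·V(θ) dθ = −∫₀^{2π} H(θ)·V(θ) dθ. -/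
open scoped Real RealInnerProductSpace

private lemma periodic_deriv_aux {E : Type*} [NormedAddCommGroup E] [NormedSpace ℝ E]
    {f : ℝ → E} {c : ℝ} (hf : Function.Periodic f c) : Function.Periodic (deriv f) c :=
  fun x => by
  have h : (fun y => f (y + c)) = f := funext hf
  rw [← deriv_comp_add_const, h]

private lemma cross_inner_aux (x y : EuclideanSpace ℝ (Fin 2)) :
    ⟪x,x⟫ * ⟪y,y⟫ = ⟪x,y⟫^2 + (x 0 * y 1 - x 1 * y 0)^2 := by
  simp only [PiLp.inner_apply, RCLike.inner_apply, Fin.sum_univ_two, starRingEnd_apply,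
    star_trivial]
  ring

/-- The field `G = (W − 1)H + (2π/l)W'T` realizes the gradient of the log-perimeter in the
coherent tangent space: if `W` has zero mean and solves
`(2π/l)² W'' = (W − 1)κ² − (1/(2π))∫₀^{2π}(W − 1)κ² dθ`, then (a) `G` has constant
tangential divergence, and (b) `∫₀^{2π} G·V dθ = −∫₀^{2π} H·V dθ` for every smooth
`2π`-periodic `V` whose tangential divergence `(2π/l) T·V'` is constant. -/
theorem log_perimeter_coherent_gradient
    (l : ℝ) (hl : 0 < l)
    (Φ : ℝ → EuclideanSpace ℝ (Fin 2)) (hΦ : ContDiff ℝ (⊤ : ℕ∞) Φ)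
    (hΦper : Function.Periodic Φ (2 * π))
    (hspeed : ∀ θ, ‖deriv Φ θ‖ = l / (2 * π))
    (T N H : ℝ → EuclideanSpace ℝ (Fin 2))
    (hT : ∀ θ, T θ = (2 * π / l) • deriv Φ θ)
    (hN : ∀ θ, N θ 0 = -(T θ 1) ∧ N θ 1 = T θ 0)
    (hH : ∀ θ, H θ = (4 * π ^ 2 / l ^ 2) • deriv (deriv Φ) θ)
    (κ : ℝ → ℝ) (hκ : ∀ θ, κ θ = ⟪H θ, N θ⟫)
    (W : ℝ → ℝ) (hW : ContDiff ℝ (⊤ : ℕ∞) W) (hWper : Function.Periodic W (2 * π))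
    (hWmean : ∫ θ in (0 : ℝ)..(2 * π), W θ = 0)
    (hWeq : ∀ θ, (2 * π / l) ^ 2 * deriv (deriv W) θ =
      (W θ - 1) * κ θ ^ 2 -
        (1 / (2 * π)) * ∫ θ' in (0 : ℝ)..(2 * π), (W θ' - 1) * κ θ' ^ 2)
    (G : ℝ → EuclideanSpace ℝ (Fin 2))
    (hG : ∀ θ, G θ = (W θ - 1) • H θ + ((2 * π / l) * deriv W θ) • T θ) :
    (∀ θ₁ θ₂, (2 * π / l) * ⟪T θ₁, deriv G θ₁⟫ = (2 * π / l) * ⟪T θ₂, deriv G θ₂⟫) ∧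
    (∀ V : ℝ → EuclideanSpace ℝ (Fin 2), ContDiff ℝ (⊤ : ℕ∞) V →
      Function.Periodic V (2 * π) →
      (∀ θ₁ θ₂, (2 * π / l) * ⟪T θ₁, deriv V θ₁⟫ = (2 * π / l) * ⟪T θ₂, deriv V θ₂⟫) →
      ∫ θ in (0 : ℝ)..(2 * π), ⟪G θ, V θ⟫ =
        -∫ θ in (0 : ℝ)..(2 * π), ⟪H θ, V θ⟫) := by
  have hπ : (0:ℝ) < π := Real.pi_pos
  have hl0 : l ≠ 0 := ne_of_gt hl
  have hπ0 : π ≠ 0 := ne_of_gt hπ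
  set k : ℝ := 2 * π / l with hk
  have hk0 : k ≠ 0 := by positivity
  have hk1 : k * (l / (2 * π)) = 1 := by rw [hk]; field_simp
  -- derivatives of Φ
  obtain ⟨hΦd, hΦ1⟩ := contDiff_infty_iff_deriv.mp (hΦ.of_le (by simp))
  set f := deriv Φ with hf
  obtain ⟨hΦ1d, hΦ2⟩ := contDiff_infty_iff_deriv.mp hΦ1
  set g := deriv f with hgdef
  obtain ⟨hΦ2d, hΦ3⟩ := contDiff_infty_iff_deriv.mp hΦ2
  set g3 := deriv g with hg3def
  have hdg : ∀ θ, HasDerivAt f (g θ) θ := fun θ => (hΦ1d θ).hasDerivAt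
  have hdg3 : ∀ θ, HasDerivAt g (g3 θ) θ := fun θ => (hΦ2d θ).hasDerivAt
  -- derivatives of W
  obtain ⟨hWd, hW1⟩ := contDiff_infty_iff_deriv.mp (hW.of_le (by simp))
  obtain ⟨hW1d, hW2⟩ := contDiff_infty_iff_deriv.mp hW1
  have hdW : ∀ θ, HasDerivAt W (deriv W θ) θ := fun θ => (hWd θ).hasDerivAt
  have hdW2 : ∀ θ, HasDerivAt (deriv W) (deriv (deriv W) θ) θ := fun θ => (hW1d θ).hasDerivAt
  -- inner product facts
  have hff : ∀ θ, ⟪f θ, f θ⟫ = (l / (2*π))^2 := fun θ => by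
    rw [real_inner_self_eq_norm_sq, hspeed θ]
  have hfg : ∀ θ, ⟪f θ, g θ⟫ = 0 := by
    intro θ
    have h1 : HasDerivAt (fun t => ⟪f t, f t⟫) (⟪f θ, g θ⟫ + ⟪g θ, f θ⟫) θ :=
      (hdg θ).inner ℝ (hdg θ)
    have h2 : HasDerivAt (fun t => ⟪f t, f t⟫) 0 θ := by
      have h : (fun t => ⟪f t, f t⟫ : ℝ → ℝ) = fun _ => (l/(2*π))^2 := funext hff
      rw [h]; exact hasDerivAt_const _ _
    have h3 := h1.unique h2
    have h4 := real_inner_comm (f θ) (g θ)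
    linarith
  have hfg3 : ∀ θ, ⟪f θ, g3 θ⟫ = -⟪g θ, g θ⟫ := by
    intro θ
    have h1 : HasDerivAt (fun t => ⟪f t, g t⟫) (⟪f θ, g3 θ⟫ + ⟪g θ, g θ⟫) θ :=
      (hdg θ).inner ℝ (hdg3 θ)
    have h2 : HasDerivAt (fun t => ⟪f t, g t⟫) 0 θ := by
      have h : (fun t => ⟪f t, g t⟫ : ℝ → ℝ) = fun _ => 0 := funext hfg
      rw [h]; exact hasDerivAt_const _ _
    have h3 := h1.unique h2
    linarith
  -- H and T in terms of k
  have hHfun : ∀ θ, H θ = k^2 • g θ := by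
    intro θ
    rw [hH θ]
    congr 1
    rw [hk]; ring
  have hgf : ∀ θ, ⟪g θ, f θ⟫ = 0 := fun θ => by
    rw [real_inner_comm]; exact hfg θ
  have hHT : ∀ θ, ⟪H θ, T θ⟫ = 0 := by
    intro θ
    rw [hHfun θ, hT θ, real_inner_smul_left, real_inner_smul_right, hgf θ]
    ring
  have hTT : ∀ θ, ⟪T θ, T θ⟫ = 1 := by
    intro θ
    rw [hT θ, real_inner_smul_left, real_inner_smul_right, hff θ]
    rw [hk]; field_simp
  have hHH : ∀ θ, ⟪H θ, H θ⟫ = k^4 * ⟪g θ, g θ⟫ := by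
    intro θ
    rw [hHfun θ, real_inner_smul_left, real_inner_smul_right]
    ring
  -- scalar curvature squared
  have hκ2 : ∀ θ, κ θ ^ 2 = k^4 * ⟪g θ, g θ⟫ := by
    intro θ
    have hc := cross_inner_aux (H θ) (T θ)
    rw [hHT θ, hTT θ] at hc
    have hκval : κ θ = H θ 1 * T θ 0 - H θ 0 * T θ 1 := by
      rw [hκ θ]
      simp only [PiLp.inner_apply, RCLike.inner_apply, Fin.sum_univ_two, starRingEnd_apply,
        star_trivial, (hN θ).1, (hN θ).2]
      ring
    rw [← hHH θ]
    rw [hκval]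
    nlinarith [hc]
  -- part (a)
  set c : ℝ := (1 / (2 * π)) * ∫ θ' in (0 : ℝ)..(2 * π), (W θ' - 1) * κ θ' ^ 2 with hc
  have hGfun : G = fun θ => (k^2 * (W θ - 1)) • g θ + (k^2 * deriv W θ) • f θ := by
    funext θ
    rw [hG θ, hHfun θ, hT θ, smul_smul, smul_smul]
    congr 1
    · congr 1; ring
    · congr 1; ring
  have hdGat : ∀ θ, HasDerivAt G
      (((k^2 * (W θ - 1)) • g3 θ + (k^2 * deriv W θ) • g θ) +
       ((k^2 * deriv W θ) • g θ + (k^2 * deriv (deriv W) θ) • f θ)) θ := by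
    intro θ
    rw [hGfun]
    exact ((((hdW θ).sub_const 1).const_mul (k^2)).smul (hdg3 θ)).add
      (((hdW2 θ).const_mul (k^2)).smul (hdg θ))
  have key : ∀ θ, k * ⟪T θ, deriv G θ⟫ = -c := by
    intro θ
    rw [(hdGat θ).deriv, hT θ]
    rw [real_inner_smul_left]
    simp only [inner_add_right, real_inner_smul_right, hfg θ, hfg3 θ, hff θ]
    have hWe := hWeq θ
    rw [hκ2 θ] at hWe
    have hk1' : k^2 * (l / (2 * π))^2 = 1 := by
      linear_combination (k * (l / (2 * π)) + 1) * hk1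
    linear_combination (k^2 * (l/(2*π))^2) * hWe +
      ((W θ - 1) * (k^4 * ⟪g θ, g θ⟫) - c) * hk1'
  constructor
  · intro θ₁ θ₂; rw [key θ₁, key θ₂]
  -- part (b)
  intro V hV hVper hVcoh
  obtain ⟨hVd, hV1⟩ := contDiff_infty_iff_deriv.mp (hV.of_le (by simp))
  set d : ℝ := k * ⟪T 0, deriv V 0⟫ with hd
  have hVcoh' : ∀ θ, k * ⟪T θ, deriv V θ⟫ = d := fun θ => hVcoh θ 0
  -- continuity
  have hfc : Continuous f := hΦ1.continuous
  have hgc : Continuous g := hΦ2.continuous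
  have hWc : Continuous W := hW.continuous
  have hW'c : Continuous (deriv W) := hW1.continuous
  have hVc : Continuous V := hV.continuous
  have hTfun : T = fun θ => k • f θ := funext hT
  have hTc : Continuous T := by rw [hTfun]; exact hfc.const_smul k
  have hHfun' : H = fun θ => k^2 • g θ := funext hHfun
  have hHc : Continuous H := by rw [hHfun']; exact hgc.const_smul (k^2)
  have hGc : Continuous G := by
    rw [hGfun]
    exact (((continuous_const.mul (hWc.sub continuous_const)).smul hgc).add
      ((continuous_const.mul hW'c).smul hfc))
  have hHVc : Continuous (fun θ => ⟪H θ, V θ⟫) := hHc.inner hVc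
  set v : ℝ → ℝ := fun θ => k * ⟪T θ, V θ⟫ with hv
  have hvc : Continuous v := continuous_const.mul (hTc.inner hVc)
  -- derivative of v
  have hdv : ∀ θ, HasDerivAt v (⟪H θ, V θ⟫ + d) θ := by
    intro θ
    have hdT : HasDerivAt T (k • g θ) θ := by
      rw [hTfun]; exact (hdg θ).const_smul k
    have h1 : HasDerivAt (fun t => ⟪T t, V t⟫)
        (⟪T θ, deriv V θ⟫ + ⟪k • g θ, V θ⟫) θ := hdT.inner ℝ (hVd θ).hasDerivAt
    have h2 := h1.const_mul k
    refine h2.congr_deriv ?_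
    rw [mul_add, hVcoh' θ, real_inner_smul_left, hHfun θ, real_inner_smul_left]
    ring
  -- periodicity of boundary terms
  have hW2π : W (2 * π) = W 0 := by simpa using hWper 0
  have hfper : Function.Periodic f (2 * π) := periodic_deriv_aux hΦper
  have hT2π : T (2 * π) = T 0 := by
    rw [hT (2*π), hT 0]
    congr 1
    simpa using hfper 0
  have hV2π : V (2 * π) = V 0 := by simpa using hVper 0
  have hv2π : v (2 * π) = v 0 := by simp only [hv, hT2π, hV2π]
  -- integration by parts:  ∫ v·W' = v(2π)W(2π) − v(0)W(0) − ∫ (⟪H,V⟫+d)·W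
  have hparts := intervalIntegral.integral_mul_deriv_eq_deriv_mul
    (u := v) (v := W) (u' := fun θ => ⟪H θ, V θ⟫ + d) (v' := deriv W)
    (a := 0) (b := 2*π)
    (fun x _ => hdv x) (fun x _ => hdW x)
    ((hHVc.add continuous_const).intervalIntegrable _ _)
    (hW'c.intervalIntegrable _ _)
  rw [hv2π, hW2π] at hparts
  simp only [sub_self, zero_sub, neg_sub] at hparts
  -- hparts : ∫ v θ * deriv W θ = -(∫ (⟪H θ, V θ⟫ + d) * W θ) ... check form
  have hsplit1 : (∫ θ in (0:ℝ)..(2*π), (⟪H θ, V θ⟫ + d) * W θ)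
      = (∫ θ in (0:ℝ)..(2*π), W θ * ⟪H θ, V θ⟫) + d * ∫ θ in (0:ℝ)..(2*π), W θ := by
    rw [← intervalIntegral.integral_const_mul, ← intervalIntegral.integral_add
      (f := fun θ => W θ * ⟪H θ, V θ⟫) (g := fun θ => d * W θ)
      ((hWc.mul hHVc).intervalIntegrable _ _)
      ((continuous_const.mul hWc).intervalIntegrable _ _)]
    congr 1; funext θ; ring
  rw [hWmean, mul_zero, add_zero] at hsplit1
  -- pointwise formula for ⟪G,V⟫
  have hGV : ∀ θ, ⟪G θ, V θ⟫ = (W θ * ⟪H θ, V θ⟫ - ⟪H θ, V θ⟫) + v θ * deriv W θ := by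
    intro θ
    rw [hG θ, inner_add_left, real_inner_smul_left, real_inner_smul_left, hv]
    ring
  calc ∫ θ in (0:ℝ)..(2*π), ⟪G θ, V θ⟫
      = (∫ θ in (0:ℝ)..(2*π), (W θ * ⟪H θ, V θ⟫ - ⟪H θ, V θ⟫))
        + ∫ θ in (0:ℝ)..(2*π), v θ * deriv W θ := by
        rw [← intervalIntegral.integral_add
          (f := fun θ => W θ * ⟪H θ, V θ⟫ - ⟪H θ, V θ⟫) (g := fun θ => v θ * deriv W θ)
          (((hWc.mul hHVc).sub hHVc).intervalIntegrable _ _)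
          ((hvc.mul hW'c).intervalIntegrable _ _)]
        congr 1; funext θ; exact hGV θ
    _ = ((∫ θ in (0:ℝ)..(2*π), W θ * ⟪H θ, V θ⟫) - ∫ θ in (0:ℝ)..(2*π), ⟪H θ, V θ⟫)
        + ∫ θ in (0:ℝ)..(2*π), v θ * deriv W θ := by
        rw [intervalIntegral.integral_sub (f := fun θ => W θ * ⟪H θ, V θ⟫) (g := fun θ => ⟪H θ, V θ⟫) ((hWc.mul hHVc).intervalIntegrable _ _)
          (hHVc.intervalIntegrable _ _)]
    _ = -∫ θ in (0:ℝ)..(2*π), ⟪H θ, V θ⟫ := by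
        rw [hparts, hsplit1]; ring
end

section
/- For every c > 0 there exists a constant C > 0 such that the following holds for every ε ∈ (0, 1/2): let φ : ℝ → ℝ be smooth, even, supported in (−ε, ε), with ∫_ℝ φ = 2c, 0 ≤ φ ≤ K where K := sup φ, and φ(x) = K for all |x| ≤ ε − ε²; define v(x) := −c + ∫_{−ε}^{x} φ(y) dy. Then |∫_{−ε}^{ε} φ(x)² (1 + v(x)²)^{−5/2} dx − (c/ε) ∫_{−c}^{c} (1 + y²)^{−5/2} dy| ≤ C. -/
open MeasureTheory

set_option maxHeartbeats 1600000 in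
/-- Curvature-energy asymptotic for the mollified corner: for every `c > 0` there is a
constant `C > 0` such that for every `ε ∈ (0, 1/2)` and every admissible mollifier `φ`
(smooth, even, supported in `(−ε, ε)`, total mass `2c`, `0 ≤ φ ≤ K = sup φ`, equal to `K`
on `|x| ≤ ε − ε²`), with slope `v(x) = −c + ∫_{−ε}^x φ`,
`|∫_{−ε}^{ε} φ²(1 + v²)^{−5/2} dx − (c/ε)∫_{−c}^{c}(1 + y²)^{−5/2} dy| ≤ C`. -/
theorem mollified_corner_curvature_energy (c : ℝ) (hc : 0 < c) :
    ∃ C : ℝ, 0 < C ∧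
      ∀ ε : ℝ, ε ∈ Set.Ioo (0 : ℝ) (1 / 2) →
      ∀ φ : ℝ → ℝ, ContDiff ℝ (⊤ : ℕ∞) φ → (∀ x, φ (-x) = φ x) →
        Function.support φ ⊆ Set.Ioo (-ε) ε →
        (∫ x, φ x) = 2 * c →
        ∀ K : ℝ, (∀ x, 0 ≤ φ x) → (∀ x, φ x ≤ K) →
          (∀ x, |x| ≤ ε - ε ^ 2 → φ x = K) →
        ∀ v : ℝ → ℝ, (∀ x, v x = -c + ∫ y in (-ε)..x, φ y) →
          |(∫ x in (-ε)..ε, φ x ^ 2 * ((1 + v x ^ 2) ^ ((5 : ℝ) / 2))⁻¹) -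
              (c / ε) * ∫ y in (-c)..c, ((1 + y ^ 2) ^ ((5 : ℝ) / 2))⁻¹| ≤ C := by
  refine ⟨12 * c ^ 2 + 1, by positivity, ?_⟩
  rintro ε ⟨hε0, hε2⟩ φ hφsm hφeven hφsupp hφmass K hφ0 hφK hφeq v hv
  have hveq : v = fun x => -c + ∫ y in (-ε)..x, φ y := funext hv
  subst hveq
  set g : ℝ → ℝ := fun y => ((1 + y ^ 2) ^ ((5 : ℝ) / 2))⁻¹ with hg
  clear_value g
  have hφc : Continuous φ := hφsm.continuous
  have hφi : ∀ a b : ℝ, IntervalIntegrable φ volume a b := fun a b =>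
    hφc.intervalIntegrable a b
  -- continuity and bounds of g
  have hbpos : ∀ y : ℝ, (0 : ℝ) < 1 + y ^ 2 := fun y => by positivity
  have hrpos : ∀ y : ℝ, (0 : ℝ) < (1 + y ^ 2) ^ ((5 : ℝ) / 2) := fun y =>
    Real.rpow_pos_of_pos (hbpos y) _
  have hg_cont : Continuous g := by
    rw [hg]
    have h1 : Continuous fun y : ℝ => (1 + y ^ 2 : ℝ) ^ ((5 : ℝ) / 2) :=
      (continuous_const.add (continuous_pow 2)).rpow_const fun y => Or.inl (hbpos y).ne'
    exact h1.inv₀ fun y => (hrpos y).ne'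
  have hg0 : ∀ y, 0 ≤ g y := by
    intro y; rw [hg]; exact (inv_pos.mpr (hrpos y)).le
  have hg1 : ∀ y, g y ≤ 1 := by
    intro y
    have : (1 : ℝ) ≤ (1 + y ^ 2) ^ ((5 : ℝ) / 2) :=
      Real.one_le_rpow (by nlinarith [sq_nonneg y]) (by norm_num)
    simpa [hg] using inv_le_one_of_one_le₀ this
  have hK0 : 0 ≤ K := le_trans (hφ0 0) (hφK 0)
  -- v and its derivative
  set v : ℝ → ℝ := fun x => -c + ∫ y in (-ε)..x, φ y with hvdef
  clear_value v
  have hvd : ∀ x, HasDerivAt v (φ x) x := by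
    intro x
    have h1 : HasDerivAt (fun u => ∫ y in (-ε)..u, φ y) (φ x) x :=
      intervalIntegral.integral_hasDerivAt_right (hφi _ _)
        (hφc.stronglyMeasurableAtFilter _ _) hφc.continuousAt
    simpa [hvdef] using h1.const_add (-c)
  have hvcont : Continuous v := by
    rw [continuous_iff_continuousAt]; exact fun x => (hvd x).continuousAt
  -- total mass over the interval
  have hmass' : (∫ x in (-ε)..ε, φ x) = 2 * c := by
    have h1 : (∫ x in Set.Ioo (-ε) ε, φ x) = ∫ x, φ x :=
      setIntegral_eq_integral_of_forall_compl_eq_zero fun x hx =>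
        Function.notMem_support.mp fun hs => hx (hφsupp hs)
    rw [intervalIntegral.integral_of_le (by linarith), integral_Ioc_eq_integral_Ioo]
    rw [h1, hφmass]
  have hva : v (-ε) = -c := by simp [hvdef]
  have hvb : v ε = c := by simp [hvdef, hmass']; ring
  -- substitution
  have hsub : (∫ x in (-ε)..ε, φ x * g (v x)) = ∫ y in (-c)..c, g y := by
    have := intervalIntegral.integral_comp_smul_deriv
      (f := v) (f' := φ) (g := g) (a := -ε) (b := ε)
      (fun x _ => hvd x) hφc.continuousOn hg_cont
    rw [hva, hvb] at this
    simpa [smul_eq_mul, Function.comp] using this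
  -- bounds on K
  have hεε : 0 < ε - ε ^ 2 := by nlinarith
  have hKlb : c / ε ≤ K := by
    have h1 : (∫ x in (-ε)..ε, φ x) ≤ ∫ x in (-ε)..ε, (K : ℝ) := by
      apply intervalIntegral.integral_mono_on (by linarith) (hφi _ _)
        intervalIntegrable_const
      intro x _; exact hφK x
    rw [hmass'] at h1
    simp only [intervalIntegral.integral_const, smul_eq_mul] at h1
    rw [div_le_iff₀ hε0]
    nlinarith
  have hKub : K ≤ c / (ε - ε ^ 2) := by
    have h1 : (∫ x in (-(ε - ε ^ 2))..(ε - ε ^ 2), φ x) ≤ ∫ x in (-ε)..ε, φ x := by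
      apply intervalIntegral.integral_mono_interval (by nlinarith) (by linarith)
        (by nlinarith)
      · filter_upwards with x using hφ0 x
      · exact hφi _ _
    have h2 : (∫ x in (-(ε - ε ^ 2))..(ε - ε ^ 2), φ x)
        = ∫ x in (-(ε - ε ^ 2))..(ε - ε ^ 2), (K : ℝ) := by
      apply intervalIntegral.integral_congr
      intro x hx
      apply hφeq
      rw [Set.uIcc_of_le (by linarith)] at hx
      rw [abs_le]; exact ⟨hx.1, hx.2⟩
    rw [h2] at h1
    simp only [intervalIntegral.integral_const, smul_eq_mul] at h1
    rw [hmass'] at h1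
    rw [le_div_iff₀ hεε]
    nlinarith
  -- integrability of pieces
  have hcont1 : Continuous fun x => φ x * g (v x) := hφc.mul (hg_cont.comp hvcont)
  have hcont2 : Continuous fun x => (φ x - K) * (φ x * g (v x)) :=
    (hφc.sub continuous_const).mul hcont1
  -- decomposition
  have hdecomp : (∫ x in (-ε)..ε, φ x ^ 2 * g (v x))
      = K * (∫ x in (-ε)..ε, φ x * g (v x))
        + ∫ x in (-ε)..ε, (φ x - K) * (φ x * g (v x)) := by
    rw [← intervalIntegral.integral_const_mul, ← intervalIntegral.integral_add (f := fun x => K * (φ x * g (v x)))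
      ((continuous_const.mul hcont1).intervalIntegrable _ _)
      (hcont2.intervalIntegrable _ _)]
    apply intervalIntegral.integral_congr
    intro x _; ring
  -- bound the error term
  set E : ℝ := ∫ x in (-ε)..ε, (φ x - K) * (φ x * g (v x)) with hE
  have hptbd : ∀ x : ℝ, |(φ x - K) * (φ x * g (v x))| ≤ K * K := by
    intro x
    rw [abs_mul, abs_mul]
    have h1 : |φ x - K| ≤ K := by rw [abs_le]; constructor <;> nlinarith [hφ0 x, hφK x]
    have h2 : |φ x| ≤ K := by rw [abs_le]; constructor <;> nlinarith [hφ0 x, hφK x]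
    have h3 : |g (v x)| ≤ 1 := by rw [abs_le]; exact ⟨by linarith [hg0 (v x)], hg1 _⟩
    calc |φ x - K| * (|φ x| * |g (v x)|) ≤ K * (K * 1) := by
          apply mul_le_mul h1 _ (by positivity) hK0
          apply mul_le_mul h2 h3 (abs_nonneg _) hK0
      _ = K * K := by ring
  have hEsplit : E = (∫ x in (-ε)..(-(ε - ε ^ 2)), (φ x - K) * (φ x * g (v x)))
      + (∫ x in (-(ε - ε ^ 2))..(ε - ε ^ 2), (φ x - K) * (φ x * g (v x)))
      + ∫ x in (ε - ε ^ 2)..ε, (φ x - K) * (φ x * g (v x)) := by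
    rw [hE, ← intervalIntegral.integral_add_adjacent_intervals
      (hcont2.intervalIntegrable (-ε) (ε - ε ^ 2)) (hcont2.intervalIntegrable (ε - ε ^ 2) ε),
      ← intervalIntegral.integral_add_adjacent_intervals
      (hcont2.intervalIntegrable (-ε) (-(ε - ε ^ 2)))
      (hcont2.intervalIntegrable (-(ε - ε ^ 2)) (ε - ε ^ 2))]
  have hmid : (∫ x in (-(ε - ε ^ 2))..(ε - ε ^ 2), (φ x - K) * (φ x * g (v x))) = 0 := by
    have : ∀ x ∈ Set.uIcc (-(ε - ε ^ 2)) (ε - ε ^ 2),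
        (φ x - K) * (φ x * g (v x)) = (fun _ => (0 : ℝ)) x := by
      intro x hx
      rw [Set.uIcc_of_le (by linarith)] at hx
      have : φ x = K := hφeq x (by rw [abs_le]; exact ⟨hx.1, hx.2⟩)
      simp [this]
    rw [intervalIntegral.integral_congr this, intervalIntegral.integral_const]
    simp
  have hside1 : |∫ x in (-ε)..(-(ε - ε ^ 2)), (φ x - K) * (φ x * g (v x))|
      ≤ K * K * ε ^ 2 := by
    have := intervalIntegral.norm_integral_le_of_norm_le_const
      (a := -ε) (b := -(ε - ε ^ 2)) (C := K * K)
      (f := fun x => (φ x - K) * (φ x * g (v x))) (fun x _ => hptbd x)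
    rw [Real.norm_eq_abs] at this
    calc |∫ x in (-ε)..(-(ε - ε ^ 2)), (φ x - K) * (φ x * g (v x))|
        ≤ K * K * |(-(ε - ε ^ 2)) - (-ε)| := this
      _ = K * K * ε ^ 2 := by rw [show (-(ε - ε ^ 2)) - (-ε) = ε ^ 2 by ring,
          abs_of_nonneg (by positivity)]
  have hside2 : |∫ x in (ε - ε ^ 2)..ε, (φ x - K) * (φ x * g (v x))|
      ≤ K * K * ε ^ 2 := by
    have := intervalIntegral.norm_integral_le_of_norm_le_const
      (a := ε - ε ^ 2) (b := ε) (C := K * K)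
      (f := fun x => (φ x - K) * (φ x * g (v x))) (fun x _ => hptbd x)
    rw [Real.norm_eq_abs] at this
    calc |∫ x in (ε - ε ^ 2)..ε, (φ x - K) * (φ x * g (v x))|
        ≤ K * K * |ε - (ε - ε ^ 2)| := this
      _ = K * K * ε ^ 2 := by rw [show ε - (ε - ε ^ 2) = ε ^ 2 by ring,
          abs_of_nonneg (by positivity)]
  have hEbd : |E| ≤ 2 * (K * K * ε ^ 2) := by
    rw [hEsplit, hmid]
    calc |(∫ x in (-ε)..(-(ε - ε ^ 2)), (φ x - K) * (φ x * g (v x))) + 0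
        + ∫ x in (ε - ε ^ 2)..ε, (φ x - K) * (φ x * g (v x))|
        ≤ |∫ x in (-ε)..(-(ε - ε ^ 2)), (φ x - K) * (φ x * g (v x))|
          + |∫ x in (ε - ε ^ 2)..ε, (φ x - K) * (φ x * g (v x))| := by
          rw [add_zero]; exact abs_add_le _ _
      _ ≤ 2 * (K * K * ε ^ 2) := by linarith
  -- K² ε² ≤ 4 c²
  have hK2 : K * K * ε ^ 2 ≤ 4 * c ^ 2 := by
    have h1 : K * (ε - ε ^ 2) ≤ c := by
      have := hKub; rw [le_div_iff₀ hεε] at this; exact this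
    have hKε : K * ε ≤ 2 * c := by nlinarith [mul_nonneg hK0 hε0.le]
    have h2 : (K * ε) * (K * ε) ≤ (2 * c) * (2 * c) :=
      mul_le_mul hKε hKε (mul_nonneg hK0 hε0.le) (by linarith)
    calc K * K * ε ^ 2 = (K * ε) * (K * ε) := by ring
      _ ≤ (2 * c) * (2 * c) := h2
      _ = 4 * c ^ 2 := by ring
  -- bound on I
  set I : ℝ := ∫ y in (-c)..c, g y with hI
  have hIbd : |I| ≤ 2 * c := by
    have := intervalIntegral.norm_integral_le_of_norm_le_const
      (a := -c) (b := c) (C := 1) (f := g)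
      (fun x _ => by rw [Real.norm_eq_abs, abs_le]; exact ⟨by linarith [hg0 x], hg1 x⟩)
    rw [Real.norm_eq_abs] at this
    calc |I| ≤ 1 * |c - (-c)| := this
      _ = 2 * c := by rw [abs_of_nonneg (by linarith)]; ring
  -- |K - c/ε| ≤ 2c
  have hKdiff : |K - c / ε| ≤ 2 * c := by
    rw [abs_le]
    constructor
    · have : 0 < c / ε := by positivity
      linarith
    · have h1 : K ≤ c / (ε - ε ^ 2) := hKub
      have h2 : c / (ε - ε ^ 2) - c / ε ≤ 2 * c := by
        rw [div_sub_div _ _ hεε.ne' hε0.ne']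
        rw [div_le_iff₀ (by positivity)]
        have h3 : (0:ℝ) < 1 - 2 * ε := by linarith
        nlinarith [mul_pos (mul_pos hc (mul_pos hε0 hε0)) h3]
      linarith
  -- finish
  have h0 : (∫ x in (-ε)..ε, φ x ^ 2 * ((1 + v x ^ 2) ^ ((5 : ℝ) / 2))⁻¹)
      = K * I + E := by
    rw [← hsub, ← hdecomp]
    exact intervalIntegral.integral_congr fun x _ => by rw [hg]
  rw [h0]
  have habs : |K * I + E - c / ε * I| ≤ |K - c / ε| * |I| + |E| := by
    calc |K * I + E - c / ε * I| = |(K - c / ε) * I + E| := by congr 1; ring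
      _ ≤ |(K - c / ε) * I| + |E| := abs_add_le _ _
      _ = |K - c / ε| * |I| + |E| := by rw [abs_mul]
  have hprod : |K - c / ε| * |I| ≤ 2 * c * (2 * c) :=
    mul_le_mul hKdiff hIbd (abs_nonneg _) (by linarith)
  nlinarith [hEbd, hK2, habs, hprod]
end

section
/- For every c > 0 there exist ε₀ ∈ (0, 1/2) and δ > 0 such that the following holds for every ε ∈ (0, ε₀): let φ : ℝ → ℝ be smooth, even, supported in (−ε, ε), with ∫_ℝ φ = 2c, 0 ≤ φ ≤ K where K := sup φ, and φ(x) = K for all |x| ≤ ε − ε²; define v(x) := −c + ∫_{−ε}^{x} φ(y) dy. Then ∫_{−ε}^{ε} φ(x)³ (1 + v(x)²)^{−9/2} dx ≥ δ/ε². -/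
open MeasureTheory

/-- Cubed-curvature asymptotic for the mollified corner: for every `c > 0` there exist
`ε₀ ∈ (0, 1/2)` and `δ > 0` such that for every `ε ∈ (0, ε₀)` and every admissible mollifier
`φ` (smooth, even, supported in `(−ε, ε)`, total mass `2c`, `0 ≤ φ ≤ K = sup φ`, equal to
`K` on `|x| ≤ ε − ε²`), with slope `v(x) = −c + ∫_{−ε}^x φ`,
`∫_{−ε}^{ε} φ³(1 + v²)^{−9/2} dx ≥ δ/ε²`. -/
theorem mollified_corner_cubed_curvature (c : ℝ) (hc : 0 < c) :
    ∃ ε₀ : ℝ, ε₀ ∈ Set.Ioo (0 : ℝ) (1 / 2) ∧ ∃ δ : ℝ, 0 < δ ∧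
      ∀ ε : ℝ, ε ∈ Set.Ioo (0 : ℝ) ε₀ →
      ∀ φ : ℝ → ℝ, ContDiff ℝ (⊤ : ℕ∞) φ → (∀ x, φ (-x) = φ x) →
        Function.support φ ⊆ Set.Ioo (-ε) ε →
        (∫ x, φ x) = 2 * c →
        ∀ K : ℝ, (∀ x, 0 ≤ φ x) → (∀ x, φ x ≤ K) →
          (∀ x, |x| ≤ ε - ε ^ 2 → φ x = K) →
        ∀ v : ℝ → ℝ, (∀ x, v x = -c + ∫ y in (-ε)..x, φ y) →
          δ / ε ^ 2 ≤ ∫ x in (-ε)..ε, φ x ^ 3 * ((1 + v x ^ 2) ^ ((9 : ℝ) / 2))⁻¹ := by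
  set M : ℝ := (1 + c ^ 2) ^ ((9:ℝ)/2) with hMdef
  have hMpos : 0 < M := Real.rpow_pos_of_pos (by positivity) _
  refine ⟨1/4, ⟨by norm_num, by norm_num⟩, c^3 / M, by positivity, ?_⟩
  rintro ε ⟨hε0, hε4⟩ φ hφ hφeven hsupp hmass K hφ0 hφK hplateau v hv
  set a : ℝ := ε - ε^2 with hadef
  have hε1 : ε < 1 := by linarith
  have ha0 : 0 < a := by nlinarith
  have haε : a ≤ ε := by nlinarith
  have ha2 : ε / 2 ≤ a := by nlinarith
  have hφc : Continuous φ := hφ.continuous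
  have hint : ∀ p q : ℝ, IntervalIntegrable φ volume p q :=
    fun p q => hφc.intervalIntegrable p q
  -- total mass over the interval
  have hItot : (∫ x in (-ε)..ε, φ x) = 2 * c := by
    rw [intervalIntegral.integral_eq_integral_of_support_subset
      (hsupp.trans Set.Ioo_subset_Ioc_self)]
    exact hmass
  -- K ≥ c / ε
  have hKε : c ≤ K * ε := by
    have h2 : (∫ x in (-ε)..ε, φ x) ≤ ∫ _x in (-ε)..ε, K :=
      intervalIntegral.integral_mono_on (by linarith) (hint _ _)
        intervalIntegrable_const (fun x _ => hφK x)
    rw [hItot, intervalIntegral.integral_const, smul_eq_mul] at h2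
    nlinarith
  have hKpos : 0 < K := by nlinarith
  -- bound on v on [-a, a]
  have hvb : ∀ x ∈ Set.Icc (-a) a, v x ^ 2 ≤ c ^ 2 := by
    intro x hx
    have hI0 : 0 ≤ ∫ y in (-ε)..x, φ y :=
      intervalIntegral.integral_nonneg (by cases hx; linarith) (fun y _ => hφ0 y)
    have hI2 : (∫ y in (-ε)..x, φ y) ≤ ∫ y in (-ε)..ε, φ y :=
      intervalIntegral.integral_mono_interval le_rfl (by cases hx; linarith)
        (by cases hx; linarith) (ae_of_all _ fun y => hφ0 y) (hint _ _)
    rw [hItot] at hI2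
    rw [hv x]
    exact sq_le_sq' (by linarith) (by linarith)
  -- continuity of v and of the integrand
  have hvcont : Continuous v := by
    have : v = fun x => -c + ∫ y in (-ε)..x, φ y := funext hv
    rw [this]
    exact continuous_const.add (intervalIntegral.continuous_primitive hint (-ε))
  set f : ℝ → ℝ := fun x => φ x ^ 3 * ((1 + v x ^ 2) ^ ((9:ℝ)/2))⁻¹ with hfdef
  have hbase : ∀ x : ℝ, (0:ℝ) < 1 + v x ^ 2 := fun x => by positivity
  have hfc : Continuous f := by
    apply (hφc.pow 3).mul
    apply Continuous.inv₀
    · exact (continuous_const.add (hvcont.pow 2)).rpow_const fun x => Or.inr (by norm_num)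
    · exact fun x => (Real.rpow_pos_of_pos (hbase x) _).ne'
  have hfnn : ∀ x, 0 ≤ f x := fun x =>
    mul_nonneg (pow_nonneg (hφ0 x) 3)
      (inv_nonneg.2 (Real.rpow_nonneg (hbase x).le _))
  -- step A : restrict to [-a, a]
  have hA : (∫ x in (-a)..a, f x) ≤ ∫ x in (-ε)..ε, f x :=
    intervalIntegral.integral_mono_interval (by linarith) (by linarith) haε
      (ae_of_all _ fun x => hfnn x) (hfc.intervalIntegrable _ _)
  -- step B : pointwise lower bound on [-a, a]
  have hB : (∫ _x in (-a)..a, K ^ 3 * M⁻¹) ≤ ∫ x in (-a)..a, f x := by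
    apply intervalIntegral.integral_mono_on (by linarith) intervalIntegrable_const
      (hfc.intervalIntegrable _ _)
    intro x hx
    have hxa : |x| ≤ a := abs_le.2 ⟨hx.1, hx.2⟩
    have hφx : φ x = K := hplateau x hxa
    have hrp : (1 + v x ^ 2) ^ ((9:ℝ)/2) ≤ M := by
      apply Real.rpow_le_rpow (hbase x).le _ (by norm_num)
      have := hvb x hx
      linarith
    have hinv : M⁻¹ ≤ ((1 + v x ^ 2) ^ ((9:ℝ)/2))⁻¹ :=
      inv_anti₀ (Real.rpow_pos_of_pos (hbase x) _) hrp
    have : K ^ 3 * M⁻¹ ≤ K ^ 3 * ((1 + v x ^ 2) ^ ((9:ℝ)/2))⁻¹ :=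
      mul_le_mul_of_nonneg_left hinv (by positivity)
    simpa [hfdef, hφx] using this
  rw [intervalIntegral.integral_const, smul_eq_mul] at hB
  refine le_trans ?_ (hB.trans hA)
  -- arithmetic
  have hc3 : c ^ 3 ≤ (K * ε) ^ 3 := pow_le_pow_left₀ hc.le hKε 3
  rw [div_div, div_le_iff₀ (by positivity)]
  have key : (a - -a) * (K ^ 3 * M⁻¹) * (M * ε ^ 2) = (a - -a) * K ^ 3 * ε ^ 2 := by
    field_simp
  rw [key]
  have h1 : c ^ 3 ≤ K ^ 3 * ε ^ 3 := by nlinarith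
  have h2 : ε * (K ^ 3 * ε ^ 2) ≤ (a - -a) * (K ^ 3 * ε ^ 2) :=
    mul_le_mul_of_nonneg_right (by linarith) (by positivity)
  nlinarith [h2]
end
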